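/- arXiv:2412.12859 — 6 statements merged into one kernel-verified Lean document; each statement's English description precedes it below -/
import Mathlib

section
/- Let ℓ, m ∈ ℕ, let B_1, …, B_m be subsets of {1, …, ℓ}, and let r_1, …, r_m ∈ ℕ. Then there exist m pairwise disjoint sets B̃_1, …, B̃_m with B̃_i ⊆ B_i and |B̃_i| = r_i for every i = 1, …, m, if and only if for every subset M ⊆ {1, …, m} it holds that |⋃_{i ∈ M} B_i| ≥ Σ_{i ∈ M} r_i. -/
/-- **Generalization of Hall's marriage theorem.**
Given subsets `B 1, …, B m` of `{1, …, ℓ}` and multiplicities `r 1, …, r m`, there exist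
pairwise disjoint sets `Bt i ⊆ B i` with `|Bt i| = r i` for all `i` if and only if for every
`M ⊆ {1, …, m}` we have `|⋃_{i ∈ M} B i| ≥ ∑_{i ∈ M} r i`. -/
theorem stmt0 (ℓ m : ℕ) (B : Fin m → Finset (Fin ℓ)) (r : Fin m → ℕ) :
    (∃ Bt : Fin m → Finset (Fin ℓ),
        (∀ i, Bt i ⊆ B i) ∧ (∀ i, (Bt i).card = r i) ∧
        ∀ i j, i ≠ j → Disjoint (Bt i) (Bt j)) ↔
      ∀ M : Finset (Fin m), (∑ i ∈ M, r i) ≤ (M.biUnion B).card := by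
  classical
  constructor
  · rintro ⟨Bt, hsub, hcard, hdisj⟩ M
    calc ∑ i ∈ M, r i = (M.biUnion Bt).card := by
          rw [Finset.card_biUnion (fun i _ j _ hij => hdisj i j hij)]
          exact Finset.sum_congr rfl fun i _ => (hcard i).symm
      _ ≤ (M.biUnion B).card :=
          Finset.card_le_card (Finset.biUnion_subset_biUnion_of_subset_left _
            (fun x hx => hx) |>.trans (by
              intro x hx
              simp only [Finset.mem_biUnion] at hx ⊢
              obtain ⟨i, hi, hxi⟩ := hx
              exact ⟨i, hi, hsub i hxi⟩))
  · intro h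
    set ι := Σ i : Fin m, Fin (r i) with hι
    have hall : ∀ s : Finset ι, s.card ≤ (s.biUnion (fun x => B x.1)).card := by
      intro s
      rw [show s.biUnion (fun x => B x.1) = (s.image Sigma.fst).biUnion B from
        (Finset.image_biUnion).symm]
      refine le_trans ?_ (h _)
      have h2 : s ⊆ (s.image Sigma.fst).sigma (fun i => Finset.univ) := by
        intro x hx
        rw [Finset.mem_sigma]
        exact ⟨Finset.mem_image_of_mem _ hx, Finset.mem_univ _⟩
      calc s.card ≤ ((s.image Sigma.fst).sigma (fun i => Finset.univ)).card :=
            Finset.card_le_card h2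
        _ = ∑ i ∈ s.image Sigma.fst, r i := by
            rw [Finset.card_sigma]; simp
    obtain ⟨f, hfinj, hfmem⟩ :=
      (Finset.all_card_le_biUnion_card_iff_exists_injective (fun x : ι => B x.1)).mp hall
    refine ⟨fun i => Finset.univ.image (fun j : Fin (r i) => f ⟨i, j⟩), ?_, ?_, ?_⟩
    · intro i x hx
      simp only [Finset.mem_image] at hx
      obtain ⟨j, _, rfl⟩ := hx
      exact hfmem ⟨i, j⟩
    · intro i
      rw [Finset.card_image_of_injective _ (fun a b hab => ?_), Finset.card_univ,
        Fintype.card_fin]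
      have := hfinj hab
      exact (Sigma.mk.inj_iff.mp this).2.eq
    · intro i j hij
      rw [Finset.disjoint_left]
      intro x hx hx'
      simp only [Finset.mem_image] at hx hx'
      obtain ⟨a, _, rfl⟩ := hx
      obtain ⟨b, _, hb⟩ := hx'
      exact hij ((Sigma.mk.inj_iff.mp (hfinj hb)).1.symm)
end

section
/- Fix a persuasion instance, a joint action a ∈ A^N, and for each agent i a posterior p_i ∈ Δ(Ω). If (a, (p_i)_{i∈N}) is stable, then there exists a function γ: D_* → 2^A × 2^N such that for every feasible deviation δ ∈ D_{ρ_a}, writing (A', N') = γ(δ): (1) all agents in N' have the same type T and are all recommended the same action b in a (i.e., i ∈ T and a_i = b for all i ∈ N'); (2) δ(T, b, a') > 0 for every a' ∈ A'; (3) ρ_a(T, b) − |N'| < Σ_{a' ∈ A'} δ(T, b, a'); (4) for every a' ∈ A' and every i ∈ N', Σ_ω p_i(ω)·u_T(b, ρ_a | ω) ≥ Σ_ω p_i(ω)·u_T(a', ρ_a ⊕ δ | ω). -/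
open scoped Classical BigOperators

/-!
Common definitions for Bayesian persuasion with externalities and agent types.

A persuasion instance consists of a finite set `Ω` of worlds with prior `μ`, a finite set `N`
of agents partitioned into types via `type : N → T`, a finite action set `A`, type utilities
`u : T → A → (T → A → ℕ) → Ω → ℝ` over action profiles `ρ : T → A → ℕ`, a principal utility
`u0 : (T → A → ℕ) → Ω → ℝ` and a deviation bound `d`.
-/

namespace Persuasion

variable {Ω N A T : Type}

/-- The action profile `ρ_a` of a joint action `a`: the number of agents of type `t`
playing action `b`. -/
noncomputable def profileOf [Fintype N] (type : N → T) (a : N → A) : T → A → ℕ :=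
  fun t b => (Finset.univ.filter fun i => type i = t ∧ a i = b).card

/-- Total number of deviating agents specified by a deviation `δ`. -/
def devSum [Fintype T] [Fintype A] (δ : T → A → A → ℕ) : ℕ :=
  ∑ t : T, ∑ b : A, ∑ b' : A, δ t b b'

/-- Membership in `D_*`: a deviation moves between `1` and `d` agents, never from an action
to itself. -/
def IsDev [Fintype T] [Fintype A] (d : ℕ) (δ : T → A → A → ℕ) : Prop :=
  (∀ t b, δ t b b = 0) ∧ 1 ≤ devSum δ ∧ devSum δ ≤ d

/-- Membership in `D_ρ`: the deviation is feasible from the action profile `ρ`. -/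
def FeasibleDev [Fintype A] (ρ : T → A → ℕ) (δ : T → A → A → ℕ) : Prop :=
  ∀ t b, (∑ b' : A, δ t b b') ≤ ρ t b

/-- `ρ ⊕ δ`: the action profile resulting from applying deviation `δ` to `ρ`. -/
def applyDev [Fintype A] (ρ : T → A → ℕ) (δ : T → A → A → ℕ) : T → A → ℕ :=
  fun t b => ρ t b - (∑ b' : A, δ t b b') + ∑ b' : A, δ t b' b

/-- `a ⊕ a'`: the joint action replacing `a i` by `a' i` for the deviating agents `i ∈ N'`. -/
noncomputable def updAction (a : N → A) (N' : Finset N) (a' : N → A) : N → A :=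
  fun i => if i ∈ N' then a' i else a i

/-- Stability of a recommended joint action `a` given per-agent posteriors `p i ∈ Δ(Ω)`
(public / semi-private sense): no group of at most `d` agents can deviate jointly so that
each member strictly gains in expectation. -/
def StableAt [Fintype Ω] [Fintype N] (type : N → T)
    (u : T → A → (T → A → ℕ) → Ω → ℝ) (d : ℕ) (a : N → A) (p : N → Ω → ℝ) : Prop :=
  ¬ ∃ (N' : Finset N) (a' : N → A),
      1 ≤ N'.card ∧ N'.card ≤ d ∧
      ∀ i ∈ N',
        0 < ∑ ω : Ω, p i ω *
            (u (type i) (updAction a N' a' i) (profileOf type (updAction a N' a')) ω -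
              u (type i) (a i) (profileOf type a) ω)

/-- Stability in the private sense, given per-agent joint posteriors
`P i ∈ Δ(A^N × Ω)` over joint actions and worlds. -/
def StablePrivAt [Fintype Ω] [Fintype N] [Fintype A] [DecidableEq N] (type : N → T)
    (u : T → A → (T → A → ℕ) → Ω → ℝ) (d : ℕ) (P : N → (N → A) → Ω → ℝ) : Prop :=
  ¬ ∃ (N' : Finset N) (a' : N → A),
      1 ≤ N'.card ∧ N'.card ≤ d ∧
      ∀ i ∈ N',
        0 < ∑ aT : N → A, ∑ ω : Ω, P i aT ω *
            (u (type i) (updAction aT N' a' i) (profileOf type (updAction aT N' a')) ω -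
              u (type i) (aT i) (profileOf type aT) ω)

/-- A (possibly infinitely-indexed, finitely supported) policy: for each world a probability
distribution over signals. -/
def IsPolicy {S : Type} (σ : Ω → S → ℝ) : Prop :=
  (∀ ω s, 0 ≤ σ ω s) ∧ (∀ ω, (Function.support (σ ω)).Finite) ∧ ∀ ω, (∑ᶠ s, σ ω s) = 1

/-- The total probability of a signal `s` under prior `μ` and policy `σ`. -/
noncomputable def PrSig [Fintype Ω] (μ : Ω → ℝ) {S : Type} (σ : Ω → S → ℝ) (s : S) : ℝ :=
  ∑ ω : Ω, μ ω * σ ω s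

/-- The (common, public) posterior over worlds induced by a signal `s`. -/
noncomputable def postPub [Fintype Ω] (μ : Ω → ℝ) {S : Type} (σ : Ω → S → ℝ) (s : S) :
    Ω → ℝ :=
  fun ω => μ ω * σ ω s / PrSig μ σ s

/-- The principal's expected utility of a policy whose signal `s` recommends
joint action `act s`. -/
noncomputable def utilP [Fintype Ω] [Fintype N] (type : N → T) (μ : Ω → ℝ)
    (u0 : (T → A → ℕ) → Ω → ℝ) {S : Type} (act : S → N → A) (σ : Ω → S → ℝ) : ℝ :=
  ∑ ω : Ω, μ ω * ∑ᶠ s : S, σ ω s * u0 (profileOf type (act s)) ω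

/-- A public policy is stable if every signal of positive probability is stable for the
common Bayesian posterior it induces. -/
def StablePubPolicy [Fintype Ω] [Fintype N] (type : N → T) (μ : Ω → ℝ)
    (u : T → A → (T → A → ℕ) → Ω → ℝ) (d : ℕ) {S : Type} (act : S → N → A)
    (σ : Ω → S → ℝ) : Prop :=
  ∀ s : S, 0 < PrSig μ σ s → StableAt type u d (act s) fun _ => postPub μ σ s

/-- The (public) blocking profile of a signal recommending `a` and inducing the common
posterior `p`: all tuples `(δ, t, b, a')` with `δ ∈ D_{ρ_a}`, `δ t b a' > 0` and such that
subtype `(t, b)` blocks the deviation to `a'`. -/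
def blockPub [Fintype Ω] [Fintype N] [Fintype A] [Fintype T] (type : N → T)
    (u : T → A → (T → A → ℕ) → Ω → ℝ) (d : ℕ) (a : N → A) (p : Ω → ℝ) :
    Set ((T → A → A → ℕ) × T × A × A) :=
  {x | IsDev d x.1 ∧ FeasibleDev (profileOf type a) x.1 ∧
       0 < x.1 x.2.1 x.2.2.1 x.2.2.2 ∧
       (∑ ω : Ω, p ω * u x.2.1 x.2.2.2 (applyDev (profileOf type a) x.1) ω) ≤
         ∑ ω : Ω, p ω * u x.2.1 x.2.2.1 (profileOf type a) ω}

/-- `B^pub_ρ`: the subsets of `D_ρ × 𝒯 × A × A` covering every feasible deviation. -/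
def Bpub [Fintype T] [Fintype A] (d : ℕ) (ρ : T → A → ℕ) :
    Set (Set ((T → A → A → ℕ) × T × A × A)) :=
  {β | (∀ x ∈ β, IsDev d x.1 ∧ FeasibleDev ρ x.1) ∧
       ∀ δ : T → A → A → ℕ, IsDev d δ → FeasibleDev ρ δ → ∃ x ∈ β, x.1 = δ}

/-- Semi-private marginal: the probability, in world `ω`, that the public part is `a` and
agent `i`'s private part is `gi`. -/
noncomputable def margSemi {G : Type} (σ : Ω → ((N → A) × (N → G)) → ℝ)
    (i : N) (a : N → A) (gi : G) (ω : Ω) : ℝ :=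
  ∑ᶠ g : N → G, if g i = gi then σ ω (a, g) else 0

/-- Total probability of agent `i`'s semi-private observation `(a, gi)`. -/
noncomputable def PrObsSemi [Fintype Ω] (μ : Ω → ℝ) {G : Type}
    (σ : Ω → ((N → A) × (N → G)) → ℝ) (i : N) (a : N → A) (gi : G) : ℝ :=
  ∑ ω : Ω, μ ω * margSemi σ i a gi ω

/-- Agent `i`'s posterior over worlds after the semi-private observation `(a, gi)`. -/
noncomputable def postSemi [Fintype Ω] (μ : Ω → ℝ) {G : Type}
    (σ : Ω → ((N → A) × (N → G)) → ℝ) (i : N) (a : N → A) (gi : G) : Ω → ℝ :=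
  fun ω => μ ω * margSemi σ i a gi ω / PrObsSemi μ σ i a gi

/-- A semi-private policy is stable if every meta-signal of positive probability is stable
for the per-agent posteriors it induces. -/
def StableSemiPolicy [Fintype Ω] [Fintype N] (type : N → T) (μ : Ω → ℝ)
    (u : T → A → (T → A → ℕ) → Ω → ℝ) (d : ℕ) {G : Type}
    (σ : Ω → ((N → A) × (N → G)) → ℝ) : Prop :=
  ∀ s : (N → A) × (N → G), 0 < PrSig μ σ s →
    StableAt type u d s.1 fun i => postSemi μ σ i s.1 (s.2 i)

/-- Agent `i`'s semi-private blocking profile, for a fixed selection rule `γsel` (a function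
of the recommended joint action and the agents' posteriors over worlds). -/
def blockSemi [Fintype N] [Fintype T] [Fintype A]
    (γsel : (N → A) → (N → Ω → ℝ) → (T → A → A → ℕ) → Finset A × Finset N)
    (type : N → T) (d : ℕ) (a : N → A) (p : N → Ω → ℝ) (i : N) :
    Set ((T → A → A → ℕ) × Finset A) :=
  {x | IsDev d x.1 ∧ FeasibleDev (profileOf type a) x.1 ∧
       (γsel a p x.1).1 = x.2 ∧ i ∈ (γsel a p x.1).2}

/-- `B^sm_aR`: the semi-private blocking profiles of stable meta-signals with recommended
joint action `aR`, over all possible posteriors. -/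
def Bsm [Fintype Ω] [Fintype N] [Fintype T] [Fintype A]
    (γsel : (N → A) → (N → Ω → ℝ) → (T → A → A → ℕ) → Finset A × Finset N)
    (type : N → T) (u : T → A → (T → A → ℕ) → Ω → ℝ) (d : ℕ) (aR : N → A) :
    Set (N → Set ((T → A → A → ℕ) × Finset A)) :=
  {β | ∃ p : N → Ω → ℝ,
        (∀ i, (∀ ω, 0 ≤ p i ω) ∧ (∑ ω : Ω, p i ω) = 1) ∧
        StableAt type u d aR p ∧
        β = fun i => blockSemi γsel type d aR p i}

/-- Private marginal: the probability, in world `ω`, that the recommended joint action is `aT`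
and agent `i` observes `o`. -/
noncomputable def margPriv {G : Type} (σ : Ω → ((N → A) × (N → G)) → ℝ)
    (i : N) (o : A × G) (aT : N → A) (ω : Ω) : ℝ :=
  ∑ᶠ g : N → G, if aT i = o.1 ∧ g i = o.2 then σ ω (aT, g) else 0

/-- Total probability of agent `i`'s private observation `o`. -/
noncomputable def PrObsPriv [Fintype Ω] (μ : Ω → ℝ) {G : Type}
    (σ : Ω → ((N → A) × (N → G)) → ℝ) (i : N) (o : A × G) : ℝ :=
  ∑ ω : Ω, μ ω * ∑ᶠ aT : N → A, margPriv σ i o aT ω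

/-- Agent `i`'s joint posterior over joint actions and worlds after the private
observation `o`. -/
noncomputable def postPriv [Fintype Ω] (μ : Ω → ℝ) {G : Type}
    (σ : Ω → ((N → A) × (N → G)) → ℝ) (i : N) (o : A × G) : (N → A) → Ω → ℝ :=
  fun aT ω => μ ω * margPriv σ i o aT ω / PrObsPriv μ σ i o

/-- A private policy is stable if every meta-signal of positive probability is stable for
the per-agent joint posteriors it induces. -/
def StablePrivPolicy [Fintype Ω] [Fintype N] [Fintype A] [DecidableEq N] (type : N → T)
    (μ : Ω → ℝ) (u : T → A → (T → A → ℕ) → Ω → ℝ) (d : ℕ) {G : Type}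
    (σ : Ω → ((N → A) × (N → G)) → ℝ) : Prop :=
  ∀ s : (N → A) × (N → G), 0 < PrSig μ σ s →
    StablePrivAt type u d fun i => postPriv μ σ i (s.1 i, s.2 i)

/-- The set of type-preserving permutations of the agents. -/
noncomputable def Mset [Fintype N] [DecidableEq N] (type : N → T) :
    Finset (Equiv.Perm N) :=
  Finset.univ.filter fun m => ∀ i, type (m i) = type i

/-- The lottery policy `λ(σ)`: draw `(a, g)` from `σ` and a uniformly random type-preserving
permutation `m`, and send agent `i` the signal `(a (m i), g (m i))`. -/
noncomputable def lot [Fintype N] [DecidableEq N] (type : N → T) {G : Type}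
    (σ : Ω → ((N → A) × (N → G)) → ℝ) : Ω → ((N → A) × (N → G)) → ℝ :=
  fun ω s' => ((Mset type).card : ℝ)⁻¹ *
    ∑ m ∈ Mset type, ∑ᶠ s : (N → A) × (N → G),
      if ((fun i => s.1 (m i), fun i => s.2 (m i)) : (N → A) × (N → G)) = s' then σ ω s
      else 0

/-- The lottery policy `λ̃(σ)` that additionally reveals to each agent its assigned index:
agent `i` receives `(a (m i), (g (m i), m i))`. -/
noncomputable def lotTilde [Fintype N] [DecidableEq N] (type : N → T) {G : Type}
    (σ : Ω → ((N → A) × (N → G)) → ℝ) : Ω → ((N → A) × (N → G × N)) → ℝ :=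
  fun ω s' => ((Mset type).card : ℝ)⁻¹ *
    ∑ m ∈ Mset type, ∑ᶠ s : (N → A) × (N → G),
      if ((fun i => s.1 (m i), fun i => (s.2 (m i), m i)) : (N → A) × (N → G × N)) = s'
      then σ ω s else 0

/-- Agent `i`'s joint posterior over action profiles and worlds after the private
observation `o`. -/
noncomputable def postProf [Fintype Ω] [Fintype N] (type : N → T) (μ : Ω → ℝ) {G : Type}
    (σ : Ω → ((N → A) × (N → G)) → ℝ) (i : N) (o : A × G) (ρ : T → A → ℕ) (ω : Ω) : ℝ :=
  μ ω * (∑ᶠ s : (N → A) × (N → G),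
      if profileOf type s.1 = ρ ∧ s.1 i = o.1 ∧ s.2 i = o.2 then σ ω s else 0) /
    PrObsPriv μ σ i o

/-- Agent `i`'s private blocking profile, for a fixed selection rule `γsel` (a function of
the recommended joint action and the agents' joint posteriors). -/
def blockPriv [Fintype N] [Fintype T] [Fintype A]
    (γsel : (N → A) → (N → (N → A) → Ω → ℝ) → (T → A → A → ℕ) → Finset A × Finset N)
    (type : N → T) (d : ℕ) (a : N → A) (P : N → (N → A) → Ω → ℝ) (i : N) :
    Set ((T → A → A → ℕ) × Finset A) :=
  {x | IsDev d x.1 ∧ FeasibleDev (profileOf type a) x.1 ∧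
       (γsel a P x.1).1 = x.2 ∧ i ∈ (γsel a P x.1).2}

/-- `B^pv_aR`: the private blocking profiles arising from stable meta-signals with
recommended joint action `aR`. -/
def Bpv [Fintype Ω] [Fintype N] [Fintype T] [Fintype A] [DecidableEq N]
    (γsel : (N → A) → (N → (N → A) → Ω → ℝ) → (T → A → A → ℕ) → Finset A × Finset N)
    (type : N → T) (u : T → A → (T → A → ℕ) → Ω → ℝ) (d : ℕ) (aR : N → A) :
    Set (N → Set ((T → A → A → ℕ) × Finset A)) :=
  {β | ∃ P : N → (N → A) → Ω → ℝ,
        (∀ i, (∀ aT ω, 0 ≤ P i aT ω) ∧ ((∑ aT : N → A, ∑ ω : Ω, P i aT ω) = 1) ∧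
              ∀ aT ω, P i aT ω ≠ 0 → aT i = aR i) ∧
        StablePrivAt type u d P ∧
        β = fun i => blockPriv γsel type d aR P i}

/-- The private blocking profile of a meta-signal `s` of the policy `σ`. -/
noncomputable def bProfile [Fintype Ω] [Fintype N] [Fintype T] [Fintype A]
    (γsel : (N → A) → (N → (N → A) → Ω → ℝ) → (T → A → A → ℕ) → Finset A × Finset N)
    (type : N → T) (d : ℕ) (μ : Ω → ℝ) {G : Type}
    (σ : Ω → ((N → A) × (N → G)) → ℝ) (s : (N → A) × (N → G)) :
    N → Set ((T → A → A → ℕ) × Finset A) :=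
  fun i => blockPriv γsel type d s.1 (fun j => postPriv μ σ j (s.1 j, s.2 j)) i

/-- `b(σ)`: the policy replacing every agent's private message by that agent's private
blocking profile (merging meta-signals with the same private signature). -/
noncomputable def bPol [Fintype Ω] [Fintype N] [Fintype T] [Fintype A]
    (γsel : (N → A) → (N → (N → A) → Ω → ℝ) → (T → A → A → ℕ) → Finset A × Finset N)
    (type : N → T) (d : ℕ) (μ : Ω → ℝ) {G : Type}
    (σ : Ω → ((N → A) × (N → G)) → ℝ) :
    Ω → ((N → A) × (N → Set ((T → A → A → ℕ) × Finset A))) → ℝ :=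
  fun ω sb => ∑ᶠ g : N → G,
    if bProfile γsel type d μ σ (sb.1, g) = sb.2 then σ ω (sb.1, g) else 0

end Persuasion

namespace Persuasion

set_option linter.unusedSectionVars false


abbrev Idx {T A : Type} (δ : T → A → A → ℕ) : Type :=
  Σ t : T, Σ b : A, Σ a' : A, Fin (δ t b a')

lemma card_Idx {T A : Type} [Fintype T] [Fintype A] (δ : T → A → A → ℕ) :
    Fintype.card (Idx δ) = devSum δ := by
  simp [Idx, devSum]

lemma sum_idx {T A : Type} [Fintype T] [Fintype A] (δ : T → A → A → ℕ)
    (g : Idx δ → ℕ) :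
    ∑ x : Idx δ, g x
      = ∑ t : T, ∑ b : A, ∑ a' : A, ∑ k : Fin (δ t b a'), g ⟨t, b, a', k⟩ := by
  rw [← Finset.univ_sigma_univ, Finset.sum_sigma]
  refine Finset.sum_congr rfl fun t _ => ?_
  rw [← Finset.univ_sigma_univ, Finset.sum_sigma]
  refine Finset.sum_congr rfl fun b _ => ?_
  rw [← Finset.univ_sigma_univ, Finset.sum_sigma]

lemma card_idx_fst {T A : Type} [Fintype T] [Fintype A] (δ : T → A → A → ℕ) (s : T) (c : A) :
    ((Finset.univ : Finset (Idx δ)).filter fun x => x.1 = s ∧ x.2.1 = c).card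
      = ∑ a' : A, δ s c a' := by
  rw [Finset.card_filter, sum_idx]
  have h : ∀ t b a', (∑ _k : Fin (δ t b a'), if t = s ∧ b = c then 1 else 0)
      = if t = s then if b = c then δ t b a' else 0 else 0 := by
    intro t b a'
    by_cases h1 : t = s <;> by_cases h2 : b = c <;> simp [h1, h2]
  simp only [h]
  simp

lemma card_idx_trd {T A : Type} [Fintype T] [Fintype A] (δ : T → A → A → ℕ) (s : T) (c : A) :
    ((Finset.univ : Finset (Idx δ)).filter fun x => x.1 = s ∧ x.2.2.1 = c).card
      = ∑ b : A, δ s b c := by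
  rw [Finset.card_filter, sum_idx]
  have h : ∀ t b a', (∑ _k : Fin (δ t b a'), if t = s ∧ a' = c then 1 else 0)
      = if t = s then if a' = c then δ t b a' else 0 else 0 := by
    intro t b a'
    by_cases h1 : t = s <;> by_cases h2 : a' = c <;> simp [h1, h2]
  simp only [h]
  simp

variable {Ω N A T : Type} [Fintype Ω] [Fintype N] [Fintype A] [Fintype T] [DecidableEq N]

/-- The set of agents of subtype `(t,b)` who strictly prefer deviating to `a'`
(evaluated at the post-deviation profile) over staying. -/
noncomputable def Wset (type : N → T) (u : T → A → (T → A → ℕ) → Ω → ℝ)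
    (a : N → A) (p : N → Ω → ℝ) (δ : T → A → A → ℕ) (t : T) (b a' : A) : Finset N :=
  Finset.univ.filter fun i => type i = t ∧ a i = b ∧
    (∑ ω : Ω, p i ω * u t b (profileOf type a) ω) <
      ∑ ω : Ω, p i ω * u t a' (applyDev (profileOf type a) δ) ω

lemma mem_Wset (type : N → T) (u : T → A → (T → A → ℕ) → Ω → ℝ)
    (a : N → A) (p : N → Ω → ℝ) (δ : T → A → A → ℕ) (t : T) (b a' : A) (i : N) :
    i ∈ Wset type u a p δ t b a' ↔ (type i = t ∧ a i = b ∧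
      (∑ ω : Ω, p i ω * u t b (profileOf type a) ω) <
        ∑ ω : Ω, p i ω * u t a' (applyDev (profileOf type a) δ) ω) := by
  simp [Wset]

/-- The property we need of the witness pair `pr = (A', N')`. -/
def Good (type : N → T) (u : T → A → (T → A → ℕ) → Ω → ℝ)
    (a : N → A) (p : N → Ω → ℝ) (δ : T → A → A → ℕ) (pr : Finset A × Finset N) : Prop :=
  ∃ (t : T) (b : A),
    (∀ i ∈ pr.2, type i = t ∧ a i = b) ∧
    (∀ a' ∈ pr.1, 0 < δ t b a') ∧
    ((profileOf type a t b : ℤ) - pr.2.card < ∑ a' ∈ pr.1, (δ t b a' : ℤ)) ∧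
    ∀ a' ∈ pr.1, ∀ i ∈ pr.2,
      (∑ ω : Ω, p i ω * u t a' (applyDev (profileOf type a) δ) ω) ≤
        ∑ ω : Ω, p i ω * u t b (profileOf type a) ω

lemma exists_good (type : N → T) (u : T → A → (T → A → ℕ) → Ω → ℝ) (d : ℕ)
    (a : N → A) (p : N → Ω → ℝ) (hstab : StableAt type u d a p)
    (δ : T → A → A → ℕ) (hdev : IsDev d δ)
    (hfeas : FeasibleDev (profileOf type a) δ) :
    ∃ pr : Finset A × Finset N, Good type u a p δ pr := by
  by_contra hcon
  push_neg at hcon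
  have hcon' : ∀ (A' : Finset A) (N' : Finset N) (t : T) (b : A),
      (∀ i ∈ N', type i = t ∧ a i = b) →
      (∀ a' ∈ A', 0 < δ t b a') →
      (∀ a' ∈ A', ∀ i ∈ N',
        (∑ ω : Ω, p i ω * u t a' (applyDev (profileOf type a) δ) ω) ≤
          ∑ ω : Ω, p i ω * u t b (profileOf type a) ω) →
      ¬ ((profileOf type a t b : ℤ) - N'.card < ∑ a' ∈ A', (δ t b a' : ℤ)) := by
    intro A' N' t b h1 h2 h4 h3
    exact hcon (A', N') ⟨t, b, h1, h2, h3, h4⟩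
  -- The per-subtype Hall condition.
  have hH0 : ∀ (t : T) (b : A) (A' : Finset A), (∀ a' ∈ A', 0 < δ t b a') →
      (∑ a' ∈ A', δ t b a') ≤ (A'.biUnion (Wset type u a p δ t b)).card := by
    intro t b A' hA'
    by_contra hlt
    push_neg at hlt
    set U := A'.biUnion (Wset type u a p δ t b) with hU
    set St := Finset.univ.filter (fun i => type i = t ∧ a i = b) with hSt
    have hUS : U ⊆ St := by
      intro i hi
      rw [hU, Finset.mem_biUnion] at hi
      obtain ⟨a', _, hia⟩ := hi
      rw [mem_Wset] at hia
      rw [hSt, Finset.mem_filter]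
      exact ⟨Finset.mem_univ _, hia.1, hia.2.1⟩
    have hScard : St.card = profileOf type a t b := rfl
    refine hcon' A' (St \ U) t b ?_ hA' ?_ ?_
    · intro i hi
      have := (Finset.mem_sdiff.mp hi).1
      rw [hSt, Finset.mem_filter] at this
      exact this.2
    · intro a' ha' i hi
      rw [Finset.mem_sdiff] at hi
      have h1 : type i = t ∧ a i = b := by
        have := hi.1; rw [hSt, Finset.mem_filter] at this; exact this.2
      have h2 : i ∉ Wset type u a p δ t b a' := fun h =>
        hi.2 (by rw [hU]; exact Finset.mem_biUnion.mpr ⟨a', ha', h⟩)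
      rw [mem_Wset] at h2
      push_neg at h2
      exact h2 h1.1 h1.2
    · have hcard : (St \ U).card = St.card - U.card := Finset.card_sdiff_of_subset hUS
      have hUle : U.card ≤ St.card := Finset.card_le_card hUS
      have hsum : (∑ a' ∈ A', (δ t b a' : ℤ)) = ((∑ a' ∈ A', δ t b a' : ℕ) : ℤ) := by
        push_cast; rfl
      rw [hsum, hcard, ← hScard]
      omega
  -- The global Hall condition over all individual moves.
  have hHall : ∀ s : Finset (Idx δ),
      s.card ≤ (s.biUnion fun x => Wset type u a p δ x.1 x.2.1 x.2.2.1).card := by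
    intro s
    set U := s.biUnion (fun x => Wset type u a p δ x.1 x.2.1 x.2.2.1) with hU
    have h1 : s.card = ∑ tb : T × A, (s.filter fun x => (x.1, x.2.1) = tb).card :=
      Finset.card_eq_sum_card_fiberwise (fun x _ => Finset.mem_univ _)
    have h2 : U.card = ∑ tb : T × A, (U.filter fun i => (type i, a i) = tb).card :=
      Finset.card_eq_sum_card_fiberwise (fun x _ => Finset.mem_univ _)
    rw [h1, h2]
    refine Finset.sum_le_sum fun tb _ => ?_
    obtain ⟨t, b⟩ := tb
    set P := (s.filter fun x => (x.1, x.2.1) = (t, b)).image (fun x => x.2.2.1) with hP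
    have ha : (s.filter fun x => (x.1, x.2.1) = (t, b)).card ≤ ∑ a' ∈ P, δ t b a' := by
      rw [Finset.card_eq_sum_card_fiberwise (f := fun x => x.2.2.1) (t := P)
        (fun x hx => by rw [hP]; exact Finset.mem_image_of_mem _ hx)]
      refine Finset.sum_le_sum fun a' _ => ?_
      have : (((s.filter fun x => (x.1, x.2.1) = (t, b))).filter
          fun x => x.2.2.1 = a').card ≤ (Finset.range (δ t b a')).card := by
        apply Finset.card_le_card_of_injOn (fun x => (x.2.2.2 : ℕ))
        · rintro ⟨x1, x2, x3, x4⟩ hx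
          simp only [Finset.mem_coe, Finset.mem_filter, Prod.mk.injEq] at hx
          obtain ⟨⟨-, hxt, hxb⟩, hxa⟩ := hx
          subst hxt; subst hxb; subst hxa
          exact Finset.mem_range.mpr x4.isLt
        · rintro ⟨x1, x2, x3, x4⟩ hx ⟨y1, y2, y3, y4⟩ hy hxy
          simp only [Finset.mem_coe, Finset.mem_filter, Prod.mk.injEq] at hx hy
          obtain ⟨⟨-, hx1, hx2⟩, hx3⟩ := hx
          obtain ⟨⟨-, hy1, hy2⟩, hy3⟩ := hy
          subst hx1; subst hx2; subst hx3
          subst hy1; subst hy2; subst hy3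
          simp only at hxy
          have h4 : x4 = y4 := Fin.ext hxy
          rw [h4]
      simpa [Finset.card_range] using this
    have hb : (∑ a' ∈ P, δ t b a') ≤ (P.biUnion (Wset type u a p δ t b)).card := by
      apply hH0 t b P
      intro a' ha'
      rw [hP, Finset.mem_image] at ha'
      obtain ⟨⟨x1, x2, x3, x4⟩, hx, hxa⟩ := ha'
      simp only [Finset.mem_filter, Prod.mk.injEq] at hx
      simp only at hxa
      obtain ⟨-, hx1, hx2⟩ := hx
      subst hx1; subst hx2; subst hxa
      exact Nat.lt_of_le_of_lt (Nat.zero_le _) x4.isLt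
    have hc : P.biUnion (Wset type u a p δ t b) ⊆
        U.filter fun i => (type i, a i) = (t, b) := by
      intro i hi
      rw [Finset.mem_biUnion] at hi
      obtain ⟨a', ha', hia⟩ := hi
      rw [hP, Finset.mem_image] at ha'
      obtain ⟨⟨x1, x2, x3, x4⟩, hx, hxa⟩ := ha'
      simp only [Finset.mem_filter, Prod.mk.injEq] at hx
      simp only at hxa
      obtain ⟨hxs, hx1, hx2⟩ := hx
      subst hx1; subst hx2; subst hxa
      have hiW := (mem_Wset type u a p δ x1 x2 x3 i).mp hia
      refine Finset.mem_filter.mpr ⟨?_, by rw [hiW.1, hiW.2.1]⟩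
      rw [hU]
      exact Finset.mem_biUnion.mpr ⟨⟨x1, x2, x3, x4⟩, hxs, hia⟩
    calc (s.filter fun x => (x.1, x.2.1) = (t, b)).card
        ≤ ∑ a' ∈ P, δ t b a' := ha
      _ ≤ (P.biUnion (Wset type u a p δ t b)).card := hb
      _ ≤ (U.filter fun i => (type i, a i) = (t, b)).card := Finset.card_le_card hc
  -- Hall's theorem gives a system of distinct deviating agents.
  obtain ⟨f, hfinj, hfmem⟩ := (Finset.all_card_le_biUnion_card_iff_exists_injective
    (fun x : Idx δ => Wset type u a p δ x.1 x.2.1 x.2.2.1)).mp hHall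
  have hft : ∀ x : Idx δ, type (f x) = x.1 ∧ a (f x) = x.2.1 ∧
      (∑ ω : Ω, p (f x) ω * u x.1 x.2.1 (profileOf type a) ω) <
        ∑ ω : Ω, p (f x) ω * u x.1 x.2.2.1 (applyDev (profileOf type a) δ) ω :=
    fun x => (mem_Wset _ _ _ _ _ _ _ _ _).mp (hfmem x)
  set Ncoal : Finset N := Finset.univ.image f with hN
  have hNcoal : ∀ i, i ∈ Ncoal ↔ ∃ x, f x = i := by
    intro i; simp [hN]
  set acoal : N → A := fun i => if h : ∃ x, f x = i then h.choose.2.2.1 else a i with hac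
  have hacoal : ∀ x, acoal (f x) = x.2.2.1 := by
    intro x
    have hex : ∃ y, f y = f x := ⟨x, rfl⟩
    have hch : hex.choose = x := hfinj hex.choose_spec
    rw [hac]
    simp only [dif_pos hex]
    rw [hch]
  have hupd_mem : ∀ x : Idx δ, updAction a Ncoal acoal (f x) = x.2.2.1 := by
    intro x
    have hm : f x ∈ Ncoal := (hNcoal _).mpr ⟨x, rfl⟩
    rw [updAction, if_pos hm, hacoal]
  have hupd_not : ∀ i, i ∉ Ncoal → updAction a Ncoal acoal i = a i := by
    intro i hi
    rw [updAction, if_neg hi]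
  -- The realised profile is exactly `ρ ⊕ δ`.
  have hprof : profileOf type (updAction a Ncoal acoal) = applyDev (profileOf type a) δ := by
    funext s c
    set F := Finset.univ.filter
      (fun i => type i = s ∧ updAction a Ncoal acoal i = c) with hF
    set St := Finset.univ.filter (fun i => type i = s ∧ a i = c) with hS2
    have cardA : (St.filter (· ∈ Ncoal)).card = ∑ a' : A, δ s c a' := by
      have hAeq : St.filter (· ∈ Ncoal)
          = ((Finset.univ : Finset (Idx δ)).filter
              fun x => x.1 = s ∧ x.2.1 = c).image f := by
        ext i
        simp only [Finset.mem_filter, Finset.mem_image, Finset.mem_univ, true_and, hS2]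
        constructor
        · rintro ⟨⟨hts, hac'⟩, hiN⟩
          obtain ⟨x, rfl⟩ := (hNcoal i).mp hiN
          exact ⟨x, ⟨(hft x).1.symm.trans hts, (hft x).2.1.symm.trans hac'⟩, rfl⟩
        · rintro ⟨x, ⟨hx1, hx2⟩, rfl⟩
          exact ⟨⟨(hft x).1.trans hx1, (hft x).2.1.trans hx2⟩, (hNcoal _).mpr ⟨x, rfl⟩⟩
      rw [hAeq, Finset.card_image_of_injective _ hfinj, card_idx_fst]
    have cardB : (F.filter (· ∈ Ncoal)).card = ∑ b' : A, δ s b' c := by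
      have hBeq : F.filter (· ∈ Ncoal)
          = ((Finset.univ : Finset (Idx δ)).filter
              fun x => x.1 = s ∧ x.2.2.1 = c).image f := by
        ext i
        simp only [Finset.mem_filter, Finset.mem_image, Finset.mem_univ, true_and, hF]
        constructor
        · rintro ⟨⟨hts, hupd⟩, hiN⟩
          obtain ⟨x, rfl⟩ := (hNcoal i).mp hiN
          exact ⟨x, ⟨(hft x).1.symm.trans hts, (hupd_mem x).symm.trans hupd⟩, rfl⟩
        · rintro ⟨x, ⟨hx1, hx2⟩, rfl⟩
          exact ⟨⟨(hft x).1.trans hx1, (hupd_mem x).trans hx2⟩, (hNcoal _).mpr ⟨x, rfl⟩⟩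
      rw [hBeq, Finset.card_image_of_injective _ hfinj, card_idx_trd]
    have hFnot : F.filter (· ∉ Ncoal) = St.filter (· ∉ Ncoal) := by
      ext i
      simp only [Finset.mem_filter, Finset.mem_univ, true_and, hF, hS2]
      constructor
      · rintro ⟨⟨h1, h2⟩, h3⟩
        exact ⟨⟨h1, (hupd_not i h3).symm.trans h2⟩, h3⟩
      · rintro ⟨⟨h1, h2⟩, h3⟩
        exact ⟨⟨h1, (hupd_not i h3).trans h2⟩, h3⟩
    have hsplitF : (F.filter (· ∈ Ncoal)).card + (F.filter (· ∉ Ncoal)).card = F.card :=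
      Finset.card_filter_add_card_filter_not _
    have hsplitS : (St.filter (· ∈ Ncoal)).card + (St.filter (· ∉ Ncoal)).card = St.card :=
      Finset.card_filter_add_card_filter_not _
    have hScard : St.card = profileOf type a s c := rfl
    have hfs : (∑ b' : A, δ s c b') ≤ profileOf type a s c := hfeas s c
    show F.card = profileOf type a s c - (∑ b' : A, δ s c b') + ∑ b' : A, δ s b' c
    rw [hFnot] at hsplitF
    omega
  -- The blocking coalition contradicts stability.
  have hcard : Ncoal.card = devSum δ := by
    rw [hN, Finset.card_image_of_injective _ hfinj, Finset.card_univ, card_Idx]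
  refine hstab ⟨Ncoal, acoal, ?_, ?_, ?_⟩
  · rw [hcard]; exact hdev.2.1
  · rw [hcard]; exact hdev.2.2
  · intro i hi
    obtain ⟨x, rfl⟩ := (hNcoal i).mp hi
    rw [hprof, (hft x).1, hupd_mem x, (hft x).2.1]
    have hlt := (hft x).2.2
    have hdist : (∑ ω : Ω, p (f x) ω *
        (u x.1 x.2.2.1 (applyDev (profileOf type a) δ) ω - u x.1 x.2.1 (profileOf type a) ω))
        = (∑ ω : Ω, p (f x) ω * u x.1 x.2.2.1 (applyDev (profileOf type a) δ) ω)
          - ∑ ω : Ω, p (f x) ω * u x.1 x.2.1 (profileOf type a) ω := by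
      rw [← Finset.sum_sub_distrib]
      exact Finset.sum_congr rfl fun ω _ => by ring
    rw [hdist]
    exact sub_pos.mpr hlt


/-- **Existence of a blocking witness (semi-private / posterior-over-worlds version).**
If a joint action `a` together with per-agent posteriors `p i ∈ Δ(Ω)` is stable, then there
is a function `γ : D_* → 2^A × 2^N` such that for every feasible deviation `δ ∈ D_{ρ_a}`,
writing `(A', N') = γ δ`: all agents of `N'` share a subtype `(t, b)`; `δ t b a' > 0` for all
`a' ∈ A'`; `ρ_a t b − |N'| < ∑_{a' ∈ A'} δ t b a'`; and no agent of `N'` wants to deviate to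
any action of `A'`. -/
theorem stmt1 {Ω N A T : Type} [Fintype Ω] [Fintype N] [Fintype A] [Fintype T]
    [DecidableEq N]
    (type : N → T) (u : T → A → (T → A → ℕ) → Ω → ℝ) (d : ℕ)
    (a : N → A) (p : N → Ω → ℝ)
    (hp0 : ∀ i ω, 0 ≤ p i ω) (hp1 : ∀ i, (∑ ω : Ω, p i ω) = 1)
    (hstab : StableAt type u d a p) :
    ∃ γ : (T → A → A → ℕ) → Finset A × Finset N,
      ∀ δ : T → A → A → ℕ, IsDev d δ → FeasibleDev (profileOf type a) δ →
        ∃ (t : T) (b : A),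
          (∀ i ∈ (γ δ).2, type i = t ∧ a i = b) ∧
          (∀ a' ∈ (γ δ).1, 0 < δ t b a') ∧
          ((profileOf type a t b : ℤ) - (γ δ).2.card <
            ∑ a' ∈ (γ δ).1, (δ t b a' : ℤ)) ∧
          ∀ a' ∈ (γ δ).1, ∀ i ∈ (γ δ).2,
            (∑ ω : Ω, p i ω * u t a' (applyDev (profileOf type a) δ) ω) ≤
              ∑ ω : Ω, p i ω * u t b (profileOf type a) ω := by
  have key : ∀ δ : T → A → A → ℕ, ∃ pr : Finset A × Finset N,
      IsDev d δ → FeasibleDev (profileOf type a) δ → Good type u a p δ pr := by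
    intro δ
    by_cases h : IsDev d δ ∧ FeasibleDev (profileOf type a) δ
    · obtain ⟨pr, hpr⟩ := exists_good type u d a p hstab δ h.1 h.2
      exact ⟨pr, fun _ _ => hpr⟩
    · exact ⟨(∅, ∅), fun h1 h2 => absurd ⟨h1, h2⟩ h⟩
  choose γ hγ using key
  exact ⟨γ, fun δ h1 h2 => hγ δ h1 h2⟩

end Persuasion
end

section
/- If a public meta-signal with recommended joint action a ∈ A^N and common posterior p ∈ Δ(Ω) is stable, then its blocking profile covers every feasible deviation: for every δ ∈ D_{ρ_a} there exist a type T and actions b, a' ∈ A with δ(T, b, a') > 0 and Σ_ω p(ω)·u_T(b, ρ_a | ω) ≥ Σ_ω p(ω)·u_T(a', ρ_a ⊕ δ | ω). -/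
open scoped Classical BigOperators

namespace Persuasion

open Finset in
lemma exists_disjoint_subsets {α ι : Type} (I : Finset ι) (k : ι → ℕ) :
    ∀ s : Finset α, (∑ i ∈ I, k i) ≤ s.card →
    ∃ C : ι → Finset α, (∀ i ∈ I, C i ⊆ s) ∧ (∀ i ∈ I, (C i).card = k i) ∧
      (∀ i ∈ I, ∀ j ∈ I, i ≠ j → Disjoint (C i) (C j)) := by
  classical
  induction I using Finset.induction_on with
  | empty => intro s _; exact ⟨fun _ => ∅, by simp, by simp, by simp⟩
  | @insert i I' hi ih =>
    intro s hs
    rw [Finset.sum_insert hi] at hs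
    obtain ⟨c, hcs, hcard⟩ := Finset.exists_subset_card_eq (s := s) (n := k i)
      (le_trans (Nat.le_add_right _ _) hs)
    have h2 : ∑ j ∈ I', k j ≤ (s \ c).card := by
      rw [Finset.card_sdiff_of_subset hcs, hcard]; omega
    obtain ⟨C', hC1, hC2, hC3⟩ := ih (s \ c) h2
    refine ⟨fun j => if j = i then c else C' j, ?_, ?_, ?_⟩
    · intro j hj
      by_cases hji : j = i
      · simp [hji, hcs]
      · simp only [if_neg hji]
        exact (hC1 j (by simpa [hji] using hj)).trans (Finset.sdiff_subset)
    · intro j hj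
      by_cases hji : j = i
      · simp [hji, hcard]
      · simpa [hji] using hC2 j (by simpa [hji] using hj)
    · intro j hj l hl hjl
      dsimp only
      by_cases hji : j = i
      · subst hji
        have hli : l ≠ j := fun h => hjl h.symm
        rw [if_pos rfl, if_neg hli]
        exact (Finset.sdiff_disjoint.mono_left (hC1 l (by simpa [hli] using hl))).symm
      · by_cases hli : l = i
        · subst hli
          rw [if_neg hji, if_pos rfl]
          exact Finset.sdiff_disjoint.mono_left (hC1 j (by simpa [hji] using hj))
        · simp only [if_neg hji, if_neg hli]
          exact hC3 j (by simpa [hji] using hj) l (by simpa [hli] using hl) hjl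


/-- **The blocking profile of a stable public meta-signal covers every feasible deviation.**
If a public meta-signal recommending `a` and inducing the common posterior `p ∈ Δ(Ω)` is
stable, then for every feasible deviation `δ ∈ D_{ρ_a}` there are a type `t` and actions
`b, a'` with `δ t b a' > 0` such that subtype `(t, b)` blocks the deviation to `a'`. -/

theorem stmt3 {Ω N A T : Type} [Fintype Ω] [Fintype N] [Fintype A] [Fintype T]
    (type : N → T) (u : T → A → (T → A → ℕ) → Ω → ℝ) (d : ℕ)
    (a : N → A) (p : Ω → ℝ)
    (hp0 : ∀ ω, 0 ≤ p ω) (hp1 : (∑ ω : Ω, p ω) = 1)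
    (hstab : StableAt type u d a (fun _ => p)) :
    ∀ δ : T → A → A → ℕ, IsDev d δ → FeasibleDev (profileOf type a) δ →
      ∃ (t : T) (b a' : A),
        0 < δ t b a' ∧
        (∑ ω : Ω, p ω * u t a' (applyDev (profileOf type a) δ) ω) ≤
          ∑ ω : Ω, p ω * u t b (profileOf type a) ω := by
  intro δ hdev hfeas
  by_contra hcon
  push_neg at hcon
  classical
  set ρ : T → A → ℕ := profileOf type a with hρ
  set S : T → A → Finset N := fun t b => Finset.univ.filter fun i => type i = t ∧ a i = b
    with hS
  have hScard : ∀ t b, (S t b).card = ρ t b := fun t b => rfl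
  have hSmem : ∀ {i t b}, i ∈ S t b ↔ (type i = t ∧ a i = b) := by
    intro i t b; simp [hS]
  have hchoice : ∀ t b, ∃ C : A → Finset N,
      (∀ a', C a' ⊆ S t b) ∧ (∀ a', (C a').card = δ t b a') ∧
      (∀ a' a'', a' ≠ a'' → Disjoint (C a') (C a'')) := by
    intro t b
    obtain ⟨C, h1, h2, h3⟩ := exists_disjoint_subsets (Finset.univ : Finset A) (δ t b) (S t b)
      (by rw [hScard]; exact hfeas t b)
    exact ⟨C, fun a' => h1 a' (Finset.mem_univ _), fun a' => h2 a' (Finset.mem_univ _),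
      fun a' a'' h => h3 a' (Finset.mem_univ _) a'' (Finset.mem_univ _) h⟩
  choose C hCsub hCcard hCdisj using hchoice
  have hCS : ∀ {i t b a'}, i ∈ C t b a' → type i = t ∧ a i = b :=
    fun {i t b a'} h => hSmem.mp (hCsub t b a' h)
  have hCC : ∀ {i} {x y : T × A × A}, i ∈ C x.1 x.2.1 x.2.2 → i ∈ C y.1 y.2.1 y.2.2 →
      x = y := by
    rintro i ⟨t, b, e⟩ ⟨t', b', e'⟩ hx hy
    obtain ⟨hx1, hx2⟩ := hCS hx
    obtain ⟨hy1, hy2⟩ := hCS hy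
    have e1 : t = t' := hx1.symm.trans hy1
    have e2 : b = b' := hx2.symm.trans hy2
    subst e1; subst e2
    by_cases e3 : e = e'
    · rw [e3]
    · exact absurd hy (Finset.disjoint_left.mp (hCdisj t b e e' e3) hx)
  set N' : Finset N := Finset.univ.biUnion (fun x : T × A × A => C x.1 x.2.1 x.2.2) with hN'
  have hN'mem : ∀ {i}, i ∈ N' ↔ ∃ x : T × A × A, i ∈ C x.1 x.2.1 x.2.2 := by
    intro i; simp [hN']
  have hcardN' : N'.card = devSum δ := by
    rw [hN', Finset.card_biUnion]
    · have : devSum δ = ∑ x : T × A × A, δ x.1 x.2.1 x.2.2 := by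
        rw [Fintype.sum_prod_type]
        refine Finset.sum_congr rfl fun t _ => ?_
        rw [Fintype.sum_prod_type]
      rw [this]
      exact Finset.sum_congr rfl fun x _ => hCcard x.1 x.2.1 x.2.2
    · intro x _ y _ hxy
      rw [Function.onFun, Finset.disjoint_left]
      intro i hix hiy
      exact hxy (hCC hix hiy)
  set cfun : N → A := fun i =>
    if h : ∃ x : T × A × A, i ∈ C x.1 x.2.1 x.2.2 then h.choose.2.2 else a i with hcf
  have hcfun : ∀ {i t b a'}, i ∈ C t b a' → cfun i = a' := by
    intro i t b a' hmem
    have h : ∃ x : T × A × A, i ∈ C x.1 x.2.1 x.2.2 := ⟨(t, b, a'), hmem⟩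
    have heq : h.choose = (t, b, a') := hCC h.choose_spec hmem
    rw [hcf]
    simp only [dif_pos h, heq]
  have hprofile : profileOf type (updAction a N' cfun) = applyDev ρ δ := by
    funext t e
    have hsplit : (Finset.univ.filter fun i => type i = t ∧ updAction a N' cfun i = e) =
        (Finset.univ.filter fun i => i ∈ N' ∧ type i = t ∧ cfun i = e) ∪
        (Finset.univ.filter fun i => i ∉ N' ∧ type i = t ∧ a i = e) := by
      ext i
      simp only [Finset.mem_filter, Finset.mem_union, Finset.mem_univ, true_and]
      by_cases hiN : i ∈ N' <;> simp [updAction, hiN]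
    have hdisj : Disjoint (Finset.univ.filter fun i => i ∈ N' ∧ type i = t ∧ cfun i = e)
        (Finset.univ.filter fun i => i ∉ N' ∧ type i = t ∧ a i = e) := by
      rw [Finset.disjoint_left]
      intro i hi hi'
      simp only [Finset.mem_filter] at hi hi'
      exact hi'.2.1 hi.2.1
    have h1 : (Finset.univ.filter fun i => i ∈ N' ∧ type i = t ∧ cfun i = e) =
        Finset.univ.biUnion (fun b : A => C t b e) := by
      ext i
      simp only [Finset.mem_filter, Finset.mem_univ, true_and, Finset.mem_biUnion]
      constructor
      · rintro ⟨hiN, hti, hci⟩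
        obtain ⟨⟨t', b', e'⟩, hx⟩ := hN'mem.mp hiN
        obtain ⟨ht', _⟩ := hCS hx
        have hcx : cfun i = e' := hcfun hx
        have e1 : t' = t := ht'.symm.trans hti
        have e2 : e' = e := hcx.symm.trans hci
        exact ⟨b', by rw [← e1, ← e2]; exact hx⟩
      · rintro ⟨b, hb⟩
        exact ⟨hN'mem.mpr ⟨(t, b, e), hb⟩, (hCS hb).1, hcfun hb⟩
    have hc1 : (Finset.univ.biUnion (fun b : A => C t b e)).card = ∑ b : A, δ t b e := by
      rw [Finset.card_biUnion]
      · exact Finset.sum_congr rfl fun b _ => hCcard t b e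
      · intro b _ b' _ hbb
        rw [Function.onFun, Finset.disjoint_left]
        intro i hib hib'
        exact hbb (congrArg (fun x : T × A × A => x.2.1)
          (hCC (x := (t, b, e)) (y := (t, b', e)) hib hib'))
    have h2 : (Finset.univ.filter fun i => i ∉ N' ∧ type i = t ∧ a i = e) = S t e \ N' := by
      ext i
      simp only [Finset.mem_filter, Finset.mem_univ, true_and, Finset.mem_sdiff, hSmem]
      tauto
    have h3 : S t e ∩ N' = Finset.univ.biUnion (fun a' : A => C t e a') := by
      ext i
      simp only [Finset.mem_inter, Finset.mem_biUnion, Finset.mem_univ, true_and]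
      constructor
      · rintro ⟨hiS, hiN⟩
        obtain ⟨⟨t', b', e'⟩, hx⟩ := hN'mem.mp hiN
        obtain ⟨ht', hb'⟩ := hCS hx
        rw [hSmem] at hiS
        have e1 : t' = t := ht'.symm.trans hiS.1
        have e2 : b' = e := hb'.symm.trans hiS.2
        exact ⟨e', by rw [← e1, ← e2]; exact hx⟩
      · rintro ⟨a', ha'⟩
        exact ⟨hCsub t e a' ha', hN'mem.mpr ⟨(t, e, a'), ha'⟩⟩
    have hc3 : (S t e ∩ N').card = ∑ a' : A, δ t e a' := by
      rw [h3, Finset.card_biUnion]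
      · exact Finset.sum_congr rfl fun a' _ => hCcard t e a'
      · intro b _ b' _ hbb
        exact hCdisj t e b b' hbb
    have hc2 : (S t e \ N').card + (S t e ∩ N').card = (S t e).card :=
      Finset.card_sdiff_add_card_inter _ _
    have hle : ∑ a' : A, δ t e a' ≤ ρ t e := hfeas t e
    have hmain : profileOf type (updAction a N' cfun) t e =
        (ρ t e - ∑ a' : A, δ t e a') + ∑ b : A, δ t b e := by
      show (Finset.univ.filter fun i => type i = t ∧ updAction a N' cfun i = e).card = _
      rw [hsplit, Finset.card_union_of_disjoint hdisj, h1, hc1, h2]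
      have := hScard t e
      omega
    rw [hmain]
    rfl
  apply hstab
  have hdevsum : devSum δ = N'.card := hcardN'.symm
  refine ⟨N', cfun, ?_, ?_, ?_⟩
  · rw [hcardN']; exact hdev.2.1
  · rw [hcardN']; exact hdev.2.2
  · intro i hiN
    obtain ⟨⟨t, b, a'⟩, hx⟩ := hN'mem.mp hiN
    have hδpos : 0 < δ t b a' := by
      rw [← hCcard t b a']
      exact Finset.card_pos.mpr ⟨i, hx⟩
    have hlt := hcon t b a' hδpos
    obtain ⟨hti, hai⟩ := hCS hx
    have hupd : updAction a N' cfun i = cfun i := by simp [updAction, hiN]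
    have expand : ∀ f g : Ω → ℝ,
        (∑ ω : Ω, p ω * (f ω - g ω)) = (∑ ω : Ω, p ω * f ω) - ∑ ω : Ω, p ω * g ω := by
      intro f g
      rw [← Finset.sum_sub_distrib]
      exact Finset.sum_congr rfl fun ω _ => mul_sub _ _ _
    simp only [hupd, hcfun hx, hprofile, hti, hai, expand]
    exact sub_pos.mpr hlt

end Persuasion
end

section
/- Fix a persuasion instance and a representative set Ā. For every finite set G and every stable public policy σ: Ω → Δ(A^N × G), there exists a stable public policy σ̄: Ω → Δ(C), where C = {(ā, β) : ā ∈ Ā, β ∈ B^pub_ā} and a meta-signal (ā, β) recommends the joint action ā, such that σ̄ yields the principal the same expected utility as σ, and for every meta-signal c ∈ C in the support of σ̄, the public signature of c under σ̄ is exactly c. -/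
open scoped Classical BigOperators

namespace Persuasion

section Helpers

variable {Ω N A T : Type} [Fintype Ω] [Fintype N] [Fintype A] [Fintype T]

/-- Sum of a `{0,1}`-indicator whose condition pins down the index. -/
lemma sum_ite_point {β : Type} [Fintype β] (c0 : β) (P : β → Prop) (Q : Prop)
    [DecidablePred P] [Decidable Q]
    (h : ∀ c, P c ↔ (c = c0 ∧ Q)) :
    (∑ c : β, if P c then (1 : ℕ) else 0) = if Q then 1 else 0 := by
  classical
  have h1 : ∀ c, (if P c then (1 : ℕ) else 0) = if c = c0 then (if Q then 1 else 0) else 0 := by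
    intro c
    by_cases hc : c = c0
    · subst hc
      by_cases hQ : Q <;> simp [h, hQ]
    · simp [h, hc]
  rw [Finset.sum_congr rfl fun c _ => h1 c]
  simp

/-- Splitting a finite set into pieces of prescribed sizes. -/
lemma exists_pieces {α β : Type} [Fintype β] (s : Finset α) (n : β → ℕ)
    (h : (∑ x : β, n x) ≤ s.card) :
    ∃ g : β → Finset α, (∀ x, g x ⊆ s) ∧ (∀ x, (g x).card = n x) ∧
      ∀ x y, x ≠ y → Disjoint (g x) (g y) := by
  classical
  suffices H : ∀ (u : Finset β) (s : Finset α), (∑ x ∈ u, n x) ≤ s.card →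
      ∃ g : β → Finset α, (∀ x, g x ⊆ s) ∧ (∀ x ∈ u, (g x).card = n x) ∧
        (∀ x ∉ u, g x = ∅) ∧ ∀ x y, x ≠ y → Disjoint (g x) (g y) by
    obtain ⟨g, h1, h2, _, h4⟩ := H Finset.univ s h
    exact ⟨g, h1, fun x => h2 x (Finset.mem_univ x), h4⟩
  intro u
  induction u using Finset.induction_on with
  | empty =>
    intro s _
    exact ⟨fun _ => ∅, fun _ => Finset.empty_subset _, by simp, fun _ _ => rfl, by simp⟩
  | @insert x u hx ih =>
    intro s hs
    rw [Finset.sum_insert hx] at hs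
    obtain ⟨t, hts, htc⟩ := Finset.exists_subset_card_eq (s := s) (n := n x)
      (le_trans (Nat.le_add_right _ _) hs)
    obtain ⟨g, hg1, hg2, hg3, hg4⟩ := ih (s \ t) (by
      have hcd := Finset.card_sdiff_of_subset hts
      omega)
    refine ⟨Function.update g x t, ?_, ?_, ?_, ?_⟩
    · intro y
      by_cases hy : y = x
      · subst hy; simpa [Function.update_self] using hts
      · rw [Function.update_of_ne hy]
        exact (hg1 y).trans (Finset.sdiff_subset)
    · intro y hy
      rcases Finset.mem_insert.mp hy with hy | hy
      · subst hy; simpa [Function.update_self] using htc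
      · rw [Function.update_of_ne (fun hxy => hx (by rw [← hxy]; exact hy))]
        exact hg2 y hy
    · intro y hy
      have h1 : y ≠ x := fun hxy => hy (hxy ▸ Finset.mem_insert_self x u)
      have h2 : y ∉ u := fun hyu => hy (Finset.mem_insert_of_mem hyu)
      rw [Function.update_of_ne h1]
      exact hg3 y h2
    · intro y z hyz
      by_cases hy : y = x
      · subst hy
        rw [Function.update_self, Function.update_of_ne (Ne.symm hyz)]
        exact ((Finset.sdiff_disjoint).mono_left (hg1 z)).symm
      · by_cases hz : z = x
        · subst hz
          rw [Function.update_self, Function.update_of_ne hy]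
          exact (Finset.sdiff_disjoint).mono_left (hg1 y)
        · rw [Function.update_of_ne hy, Function.update_of_ne hz]
          exact hg4 y z hyz

/-- The induced deviation of a coalition `(N', a')` at the joint action `a`. -/
noncomputable def inducedDev (type : N → T) (a a' : N → A) (N' : Finset N) :
    T → A → A → ℕ :=
  fun t b c => if b = c then 0 else
    (N'.filter fun i => type i = t ∧ a i = b ∧ a' i = c).card

lemma inducedDev_eq_sum (type : N → T) (a a' : N → A) (N' : Finset N) (t : T) (b c : A) :
    inducedDev type a a' N' t b c =
      ∑ i ∈ N', if (type i = t ∧ a i = b ∧ a' i = c) ∧ b ≠ c then 1 else 0 := by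
  classical
  unfold inducedDev
  by_cases hbc : b = c
  · subst hbc
    simp
  · rw [if_neg hbc, Finset.card_filter]
    refine Finset.sum_congr rfl fun i _ => ?_
    by_cases hi : type i = t ∧ a i = b ∧ a' i = c
    · rw [if_pos hi, if_pos ⟨hi, hbc⟩]
    · rw [if_neg hi, if_neg (fun h => hi h.1)]

lemma inducedDev_out (type : N → T) (a a' : N → A) (N' : Finset N) (t : T) (b : A) :
    (∑ c : A, inducedDev type a a' N' t b c) =
      (N'.filter fun i => type i = t ∧ a i = b ∧ a' i ≠ b).card := by
  classical
  rw [Finset.card_filter]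
  rw [Finset.sum_congr rfl fun c _ => inducedDev_eq_sum type a a' N' t b c]
  rw [Finset.sum_comm]
  refine Finset.sum_congr rfl fun i _ => ?_
  refine sum_ite_point (a' i) _ (type i = t ∧ a i = b ∧ a' i ≠ b) fun c => ?_
  constructor
  · rintro ⟨⟨h1, h2, h3⟩, h4⟩
    subst h3
    exact ⟨rfl, h1, h2, fun hb => h4 hb.symm⟩
  · rintro ⟨hc, h1, h2, h3⟩
    subst hc
    exact ⟨⟨h1, h2, rfl⟩, fun hb => h3 hb.symm⟩

lemma inducedDev_in (type : N → T) (a a' : N → A) (N' : Finset N) (t : T) (b : A) :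
    (∑ c : A, inducedDev type a a' N' t c b) =
      (N'.filter fun i => type i = t ∧ a' i = b ∧ a i ≠ b).card := by
  classical
  rw [Finset.card_filter]
  rw [Finset.sum_congr rfl fun c _ => inducedDev_eq_sum type a a' N' t c b]
  rw [Finset.sum_comm]
  refine Finset.sum_congr rfl fun i _ => ?_
  refine sum_ite_point (a i) _ (type i = t ∧ a' i = b ∧ a i ≠ b) fun c => ?_
  constructor
  · rintro ⟨⟨h1, h2, h3⟩, h4⟩
    subst h2
    exact ⟨rfl, h1, h3, h4⟩
  · rintro ⟨hc, h1, h2, h3⟩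
    subst hc
    exact ⟨⟨h1, rfl, h2⟩, h3⟩

lemma devSum_inducedDev (type : N → T) (a a' : N → A) (N' : Finset N) :
    devSum (inducedDev type a a' N') = ∑ i ∈ N', if a' i ≠ a i then 1 else 0 := by
  classical
  unfold devSum
  rw [Finset.sum_congr rfl fun t _ => Finset.sum_congr rfl fun b _ =>
    inducedDev_out type a a' N' t b]
  have h1 : ∀ t : T, (∑ b : A, (N'.filter fun i => type i = t ∧ a i = b ∧ a' i ≠ b).card)
      = ∑ i ∈ N', if type i = t ∧ a' i ≠ a i then 1 else 0 := by
    intro t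
    rw [Finset.sum_congr rfl fun b _ => Finset.card_filter _ _]
    rw [Finset.sum_comm]
    refine Finset.sum_congr rfl fun i _ => ?_
    refine sum_ite_point (a i) _ (type i = t ∧ a' i ≠ a i) fun b => ?_
    constructor
    · rintro ⟨h1, h2, h3⟩
      subst h2
      exact ⟨rfl, h1, h3⟩
    · rintro ⟨hb, h1, h2⟩
      subst hb
      exact ⟨h1, rfl, h2⟩
  rw [Finset.sum_congr rfl fun t _ => h1 t]
  rw [Finset.sum_comm]
  refine Finset.sum_congr rfl fun i _ => ?_
  refine sum_ite_point (type i) _ (a' i ≠ a i) fun t => ?_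
  constructor
  · rintro ⟨h1, h2⟩; exact ⟨h1.symm, h2⟩
  · rintro ⟨ht, h2⟩; exact ⟨ht.symm, h2⟩

/-- The profile of the deviated joint action is the deviated profile. -/
lemma profileOf_updAction (type : N → T) (a a' : N → A) (N' : Finset N) :
    profileOf type (updAction a N' a') =
      applyDev (profileOf type a) (inducedDev type a a' N') := by
  classical
  funext t b
  have hO := inducedDev_out type a a' N' t b
  have hI := inducedDev_in type a a' N' t b
  have hOle : (N'.filter fun i => type i = t ∧ a i = b ∧ a' i ≠ b).card ≤
      profileOf type a t b := by
    unfold profileOf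
    refine Finset.card_le_card fun i hi => ?_
    rw [Finset.mem_filter] at hi ⊢
    exact ⟨Finset.mem_univ i, hi.2.1, hi.2.2.1⟩
  have hkey : profileOf type (updAction a N' a') t b +
      (N'.filter fun i => type i = t ∧ a i = b ∧ a' i ≠ b).card =
      profileOf type a t b +
      (N'.filter fun i => type i = t ∧ a' i = b ∧ a i ≠ b).card := by
    unfold profileOf
    rw [Finset.card_filter, Finset.card_filter, Finset.card_filter, Finset.card_filter]
    have e2 : ∀ f : N → ℕ, (∑ i ∈ N', f i) = ∑ i : N, if i ∈ N' then f i else 0 := by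
      intro f
      rw [Finset.sum_ite_mem Finset.univ N' f, Finset.univ_inter]
    rw [e2, e2, ← Finset.sum_add_distrib, ← Finset.sum_add_distrib]
    refine Finset.sum_congr rfl fun i _ => ?_
    by_cases hN : i ∈ N'
    · by_cases ht : type i = t
      · by_cases h3 : a i = b <;> by_cases h4 : a' i = b <;>
          simp [updAction, hN, ht, h3, h4]
      · simp [updAction, hN, ht]
    · simp [updAction, hN]
  unfold applyDev
  rw [hO, hI]
  omega

/-- A coalition with all-zero induced deviation does not move. -/
lemma updAction_eq_of_no_move (a a' : N → A) (N' : Finset N)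
    (h : ∀ i ∈ N', a' i = a i) : updAction a N' a' = a := by
  funext i
  unfold updAction
  by_cases hi : i ∈ N'
  · rw [if_pos hi]; exact h i hi
  · rw [if_neg hi]

end Helpers

section Blocking

variable {Ω N A T : Type} [Fintype Ω] [Fintype N] [Fintype A] [Fintype T]

lemma blockPub_congr (type : N → T) (u : T → A → (T → A → ℕ) → Ω → ℝ) (d : ℕ)
    {a a' : N → A} (h : profileOf type a = profileOf type a') (p : Ω → ℝ) :
    blockPub type u d a p = blockPub type u d a' p := by
  unfold blockPub
  rw [h]

/-- Stability implies that every feasible deviation has a blocking witness. -/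
lemma stable_covering (type : N → T) (u : T → A → (T → A → ℕ) → Ω → ℝ) (d : ℕ)
    (a : N → A) (p : Ω → ℝ) (hst : StableAt type u d a (fun _ => p))
    (δ : T → A → A → ℕ) (hδ : IsDev d δ) (hfe : FeasibleDev (profileOf type a) δ) :
    ∃ x ∈ blockPub type u d a p, x.1 = δ := by
  classical
  by_contra hcon
  push_neg at hcon
  have hstrict : ∀ t b c, 0 < δ t b c →
      (∑ ω : Ω, p ω * u t b (profileOf type a) ω) <
        ∑ ω : Ω, p ω * u t c (applyDev (profileOf type a) δ) ω := by
    intro t b c hpos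
    have hne := hcon (δ, t, b, c)
    by_contra hle
    push_neg at hle
    exact hne ⟨hδ, hfe, hpos, hle⟩ rfl
  -- construct a strictly profitable coalition realizing δ
  have hsplit : ∀ t b, ∃ g : A → Finset N,
      (∀ c, g c ⊆ Finset.univ.filter fun i => type i = t ∧ a i = b) ∧
      (∀ c, (g c).card = δ t b c) ∧ ∀ c c', c ≠ c' → Disjoint (g c) (g c') := by
    intro t b
    exact exists_pieces _ _ (hfe t b)
  choose g hg1 hg2 hg3 using hsplit
  set N' : Finset N := Finset.univ.filter fun i => ∃ c, i ∈ g (type i) (a i) c with hN'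
  set a' : N → A := fun i =>
    if h : ∃ c, i ∈ g (type i) (a i) c then h.choose else a i with ha'
  have hmem_ta : ∀ t b c i, i ∈ g t b c → type i = t ∧ a i = b := by
    intro t b c i hi
    have := hg1 t b c hi
    rw [Finset.mem_filter] at this
    exact this.2
  have hmemN' : ∀ t b c i, i ∈ g t b c → i ∈ N' := by
    intro t b c i hi
    obtain ⟨h1, h2⟩ := hmem_ta t b c i hi
    rw [hN', Finset.mem_filter]
    exact ⟨Finset.mem_univ i, ⟨c, by rw [h1, h2]; exact hi⟩⟩
  have hselfmem : ∀ i ∈ N', i ∈ g (type i) (a i) (a' i) := by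
    intro i hi
    rw [hN', Finset.mem_filter] at hi
    have h := hi.2
    rw [ha']
    simp only [dif_pos h]
    exact h.choose_spec
  have huniq : ∀ t b c i, i ∈ g t b c → a' i = c := by
    intro t b c i hi
    obtain ⟨h1, h2⟩ := hmem_ta t b c i hi
    have h3 := hselfmem i (hmemN' t b c i hi)
    rw [h1, h2] at h3
    by_contra hne
    exact Finset.disjoint_left.mp (hg3 t b (a' i) c hne) h3 hi
  have hfilter : ∀ t b c, (N'.filter fun i => type i = t ∧ a i = b ∧ a' i = c) = g t b c := by
    intro t b c
    ext i
    rw [Finset.mem_filter]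
    constructor
    · rintro ⟨hiN, ht, hb, hc⟩
      have := hselfmem i hiN
      rw [ht, hb, hc] at this
      exact this
    · intro hi
      obtain ⟨h1, h2⟩ := hmem_ta t b c i hi
      exact ⟨hmemN' t b c i hi, h1, h2, huniq t b c i hi⟩
  have hind : inducedDev type a a' N' = δ := by
    funext t b c
    unfold inducedDev
    by_cases hbc : b = c
    · rw [if_pos hbc, hbc]
      exact (hδ.1 t c).symm
    · rw [if_neg hbc, hfilter, hg2]
  have hcardN' : N'.card = devSum δ := by
    have hbi : N' = (Finset.univ : Finset (T × A × A)).biUnion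
        (fun x => g x.1 x.2.1 x.2.2) := by
      ext i
      rw [Finset.mem_biUnion]
      constructor
      · intro hi
        rw [hN', Finset.mem_filter] at hi
        obtain ⟨c, hc⟩ := hi.2
        exact ⟨(type i, a i, c), Finset.mem_univ _, hc⟩
      · rintro ⟨x, _, hx⟩
        exact hmemN' x.1 x.2.1 x.2.2 i hx
    rw [hbi, Finset.card_biUnion]
    · rw [devSum]
      rw [Fintype.sum_prod_type, Finset.sum_congr rfl fun t _ => Fintype.sum_prod_type ..]
      exact Finset.sum_congr rfl fun x _ => Finset.sum_congr rfl fun b _ =>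
        Finset.sum_congr rfl fun c _ => hg2 x b c
    · intro x _ y _ hxy
      by_cases h1 : x.1 = y.1 ∧ x.2.1 = y.2.1
      · have h2 : x.2.2 ≠ y.2.2 := by
          intro h
          apply hxy
          obtain ⟨x1, x2, x3⟩ := x
          obtain ⟨y1, y2, y3⟩ := y
          simp only at h1 h ⊢
          rw [h1.1, h1.2, h]
        rw [Function.onFun, ← h1.1, ← h1.2]
        exact hg3 x.1 x.2.1 x.2.2 y.2.2 h2
      · rw [Function.onFun, Finset.disjoint_left]
        intro i hi hi'
        obtain ⟨ht1, hb1⟩ := hmem_ta x.1 x.2.1 x.2.2 i hi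
        obtain ⟨ht2, hb2⟩ := hmem_ta y.1 y.2.1 y.2.2 i hi'
        exact h1 ⟨ht1 ▸ ht2 ▸ rfl, hb1 ▸ hb2 ▸ rfl⟩
  have hδge := hδ.2.1
  have hδle := hδ.2.2
  exact hst ⟨N', a', by omega, by omega, by
    intro i hi
    have hgi := hselfmem i hi
    have hpos : 0 < δ (type i) (a i) (a' i) := by
      rw [← hg2 (type i) (a i) (a' i)]
      exact Finset.card_pos.mpr ⟨i, hgi⟩
    have hupd : updAction a N' a' i = a' i := if_pos hi
    have hprof : profileOf type (updAction a N' a') = applyDev (profileOf type a) δ := by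
      rw [profileOf_updAction type a a' N', hind]
    rw [hupd, hprof]
    have := hstrict (type i) (a i) (a' i) hpos
    have hsum : (∑ ω : Ω, p ω *
        (u (type i) (a' i) (applyDev (profileOf type a) δ) ω -
          u (type i) (a i) (profileOf type a) ω)) =
        (∑ ω : Ω, p ω * u (type i) (a' i) (applyDev (profileOf type a) δ) ω) -
        ∑ ω : Ω, p ω * u (type i) (a i) (profileOf type a) ω := by
      rw [← Finset.sum_sub_distrib]
      exact Finset.sum_congr rfl fun ω _ => by ring
    rw [hsum]
    linarith⟩

/-- If every feasible deviation has a blocking witness, the signal is stable. -/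
lemma stable_of_covering (type : N → T) (u : T → A → (T → A → ℕ) → Ω → ℝ) (d : ℕ)
    (a : N → A) (p : Ω → ℝ)
    (hcov : ∀ δ : T → A → A → ℕ, IsDev d δ → FeasibleDev (profileOf type a) δ →
      ∃ x ∈ blockPub type u d a p, x.1 = δ) :
    StableAt type u d a (fun _ => p) := by
  classical
  rintro ⟨N', a', hc1, hcd, hgain⟩
  set δ := inducedDev type a a' N' with hδdef
  have hmove : ∃ i ∈ N', a' i ≠ a i := by
    by_contra hno
    push_neg at hno
    obtain ⟨i0, hi0⟩ := Finset.card_pos.mp hc1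
    have h0 := hgain i0 hi0
    rw [updAction_eq_of_no_move a a' N' hno] at h0
    simp at h0
  have hdevsum := devSum_inducedDev type a a' N'
  have hdle : devSum δ ≤ N'.card := by
    rw [hdevsum]
    calc (∑ i ∈ N', if a' i ≠ a i then (1:ℕ) else 0) ≤ ∑ i ∈ N', 1 :=
          Finset.sum_le_sum fun i _ => by split <;> omega
      _ = N'.card := by rw [Finset.sum_const, smul_eq_mul, mul_one]
  have hdge : 1 ≤ devSum δ := by
    rw [hdevsum]
    obtain ⟨i0, hi0, hmv⟩ := hmove
    calc (1:ℕ) = if a' i0 ≠ a i0 then 1 else 0 := by rw [if_pos hmv]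
      _ ≤ _ := Finset.single_le_sum (f := fun i => if a' i ≠ a i then (1:ℕ) else 0)
          (fun i _ => by positivity) hi0
  have hIsDev : IsDev d δ := ⟨fun t b => by simp [hδdef, inducedDev], hdge, by omega⟩
  have hFeas : FeasibleDev (profileOf type a) δ := by
    intro t b
    rw [hδdef, inducedDev_out]
    unfold profileOf
    refine Finset.card_le_card fun i hi => ?_
    rw [Finset.mem_filter] at hi ⊢
    exact ⟨Finset.mem_univ i, hi.2.1, hi.2.2.1⟩
  obtain ⟨x, hx, hxδ⟩ := hcov δ hIsDev hFeas
  obtain ⟨xδ, t, b, c⟩ := x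
  obtain ⟨hxd, hxf, hxpos, hxineq⟩ := hx
  replace hxδ : xδ = δ := hxδ
  subst hxδ
  replace hxpos : 0 < δ t b c := hxpos
  replace hxineq : (∑ ω : Ω, p ω * u t c (applyDev (profileOf type a) δ) ω) ≤
      ∑ ω : Ω, p ω * u t b (profileOf type a) ω := hxineq
  -- δ t b c > 0 yields a deviating agent whose gain contradicts the blocking inequality
  have hbc : b ≠ c := by
    intro h
    rw [h] at hxpos
    simp [hδdef, inducedDev] at hxpos
  have hne : (N'.filter fun i => type i = t ∧ a i = b ∧ a' i = c).Nonempty := by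
    rw [Finset.card_pos.symm]
    have : δ t b c = (N'.filter fun i => type i = t ∧ a i = b ∧ a' i = c).card := by
      rw [hδdef]; unfold inducedDev; rw [if_neg hbc]
    omega
  obtain ⟨i, hi⟩ := hne
  rw [Finset.mem_filter] at hi
  obtain ⟨hiN, hit, hib, hic⟩ := hi
  have h0 := hgain i hiN
  have hupd : updAction a N' a' i = a' i := if_pos hiN
  have hprof : profileOf type (updAction a N' a') = applyDev (profileOf type a) δ := by
    rw [profileOf_updAction type a a' N', hδdef]
  rw [hupd, hprof, hit, hib, hic] at h0
  have hsum : (∑ ω : Ω, p ω *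
      (u t c (applyDev (profileOf type a) δ) ω - u t b (profileOf type a) ω)) =
      (∑ ω : Ω, p ω * u t c (applyDev (profileOf type a) δ) ω) -
      ∑ ω : Ω, p ω * u t b (profileOf type a) ω := by
    rw [← Finset.sum_sub_distrib]
    exact Finset.sum_congr rfl fun ω _ => by ring
  rw [hsum] at h0
  linarith

end Blocking

/-- **Revelation principle for public persuasion (Theorem 3.1).**
For every stable public policy `σ : Ω → Δ(A^N × G)` there is a stable public policy
`σb : Ω → Δ(C)`, with `C = {(aR, β) : aR ∈ Abar, β ∈ B^pub_aR}`, where a meta-signal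
`(aR, β)` recommends the joint action `aR`, which yields the principal the same expected
utility as `σ`, and such that the public signature of every meta-signal in its support is
exactly that meta-signal. -/
theorem stmt5 {Ω N A T G : Type} [Fintype Ω] [Fintype N] [Fintype A] [Fintype T]
    [Fintype G]
    (type : N → T) (μ : Ω → ℝ) (hμ0 : ∀ ω, 0 ≤ μ ω) (hμ1 : (∑ ω : Ω, μ ω) = 1)
    (u : T → A → (T → A → ℕ) → Ω → ℝ) (u0 : (T → A → ℕ) → Ω → ℝ) (d : ℕ)
    (Abar : Finset (N → A))
    (hAbar : ∀ a : N → A, ∃! aR, aR ∈ Abar ∧ profileOf type aR = profileOf type a)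
    (σ : Ω → ((N → A) × G) → ℝ)
    (hσ : IsPolicy σ)
    (hstab : StablePubPolicy type μ u d (fun s => s.1) σ) :
    ∃ σb : Ω → ((N → A) × Set ((T → A → A → ℕ) × T × A × A)) → ℝ,
      IsPolicy σb ∧
      (∀ ω s, σb ω s ≠ 0 → s.1 ∈ Abar ∧ s.2 ∈ Bpub d (profileOf type s.1)) ∧
      StablePubPolicy type μ u d (fun s => s.1) σb ∧
      utilP type μ u0 (fun s => s.1) σb = utilP type μ u0 (fun s => s.1) σ ∧
      ∀ s, 0 < PrSig μ σb s →
        s.1 ∈ Abar ∧ blockPub type u d s.1 (postPub μ σb s) = s.2 := by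
  classical
  have hrep : ∀ a : N → A, (hAbar a).choose ∈ Abar ∧
      profileOf type (hAbar a).choose = profileOf type a := fun a => (hAbar a).choose_spec.1
  set rep : (N → A) → (N → A) := fun a => (hAbar a).choose with hrepdef
  set f : ((N → A) × G) → ((N → A) × Set ((T → A → A → ℕ) × T × A × A)) :=
    fun s => (rep s.1, blockPub type u d s.1 (postPub μ σ s)) with hfdef
  set σb : Ω → ((N → A) × Set ((T → A → A → ℕ) × T × A × A)) → ℝ :=
    fun ω c => ∑ s : (N → A) × G, if f s = c then σ ω s else 0 with hσbdef
  obtain ⟨hσ0, hσfin, hσ1⟩ := hσ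
  have hσb' : ∀ ω c, σb ω c = ∑ s : (N → A) × G, if f s = c then σ ω s else 0 :=
    fun _ _ => rfl
  have hf1 : ∀ s, (f s).1 = rep s.1 := fun _ => rfl
  have hf2 : ∀ s, (f s).2 = blockPub type u d s.1 (postPub μ σ s) := fun _ => rfl
  have hσsum : ∀ ω, (∑ s : (N → A) × G, σ ω s) = 1 := fun ω => by
    rw [← finsum_eq_sum_of_fintype]; exact hσ1 ω
  have hσb0 : ∀ ω c, 0 ≤ σb ω c := by
    intro ω c
    rw [hσb']
    refine Finset.sum_nonneg fun s _ => ?_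
    by_cases hf : f s = c
    · rw [if_pos hf]; exact hσ0 ω s
    · rw [if_neg hf]
  have hwit : ∀ ω c, σb ω c ≠ 0 → ∃ s, f s = c ∧ σ ω s ≠ 0 := by
    intro ω c h
    by_contra hno
    push_neg at hno
    apply h
    rw [hσb']
    refine Finset.sum_eq_zero fun s _ => ?_
    by_cases hf : f s = c
    · rw [if_pos hf]; exact hno s hf
    · rw [if_neg hf]
  have hsuppb : ∀ ω, Function.support (σb ω) ⊆ ↑(Finset.image f Finset.univ) := by
    intro ω c hc
    obtain ⟨s, hfs, _⟩ := hwit ω c hc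
    exact Finset.mem_coe.mpr (Finset.mem_image.mpr ⟨s, Finset.mem_univ s, hfs⟩)
  -- basic posterior facts
  have hPrS0 : ∀ s, 0 ≤ PrSig μ σ s := fun s =>
    Finset.sum_nonneg fun ω _ => mul_nonneg (hμ0 ω) (hσ0 ω s)
  have hzero : ∀ s, PrSig μ σ s = 0 → ∀ ω, μ ω * σ ω s = 0 := by
    intro s h ω
    exact (Finset.sum_eq_zero_iff_of_nonneg
      (fun ω _ => mul_nonneg (hμ0 ω) (hσ0 ω s))).mp h ω (Finset.mem_univ ω)
  have hconv : ∀ (p F H : Ω → ℝ),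
      (∑ ω : Ω, p ω * (H ω - F ω)) = (∑ ω : Ω, p ω * H ω) - ∑ ω : Ω, p ω * F ω := by
    intro p F H
    rw [← Finset.sum_sub_distrib]
    exact Finset.sum_congr rfl fun ω _ => by ring
  -- linearity identities
  have hI1 : ∀ c (v : Ω → ℝ), (∑ ω : Ω, μ ω * σb ω c * v ω) =
      ∑ s : (N → A) × G, if f s = c then (∑ ω : Ω, μ ω * σ ω s * v ω) else 0 := by
    intro c v
    have h1 : ∀ ω, μ ω * σb ω c * v ω =
        ∑ s : (N → A) × G, (if f s = c then μ ω * σ ω s * v ω else 0) := by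
      intro ω
      rw [hσb', Finset.mul_sum, Finset.sum_mul]
      refine Finset.sum_congr rfl fun s _ => ?_
      by_cases hf : f s = c <;> simp [hf]
    rw [Finset.sum_congr rfl fun ω _ => h1 ω, Finset.sum_comm]
    refine Finset.sum_congr rfl fun s _ => ?_
    by_cases hf : f s = c <;> simp [hf]
  have hPrb : ∀ c, PrSig μ σb c =
      ∑ s : (N → A) × G, if f s = c then PrSig μ σ s else 0 := by
    intro c
    have := hI1 c (fun _ => 1)
    simp only [mul_one] at this
    unfold PrSig
    exact this
  have hL : ∀ (s : (N → A) × G) (v : Ω → ℝ), (∑ ω : Ω, postPub μ σ s ω * v ω) =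
      (PrSig μ σ s)⁻¹ * ∑ ω : Ω, μ ω * σ ω s * v ω := by
    intro s v
    rw [Finset.mul_sum]
    refine Finset.sum_congr rfl fun ω _ => ?_
    unfold postPub
    rw [div_eq_inv_mul]; ring
  have hLb : ∀ c (v : Ω → ℝ), (∑ ω : Ω, postPub μ σb c ω * v ω) =
      (PrSig μ σb c)⁻¹ * ∑ ω : Ω, μ ω * σb ω c * v ω := by
    intro c v
    rw [Finset.mul_sum]
    refine Finset.sum_congr rfl fun ω _ => ?_
    unfold postPub
    rw [div_eq_inv_mul]; ring
  have hX : ∀ (s : (N → A) × G) (v : Ω → ℝ), 0 < PrSig μ σ s →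
      (∑ ω : Ω, μ ω * σ ω s * v ω) = PrSig μ σ s * ∑ ω : Ω, postPub μ σ s ω * v ω := by
    intro s v hp
    rw [hL]
    field_simp
  have hX0 : ∀ (s : (N → A) × G) (v : Ω → ℝ), PrSig μ σ s = 0 →
      (∑ ω : Ω, μ ω * σ ω s * v ω) = 0 := by
    intro s v hp
    refine Finset.sum_eq_zero fun ω _ => ?_
    rw [hzero s hp ω, zero_mul]
  have hfiber : ∀ c, 0 < PrSig μ σb c → ∃ s0, f s0 = c ∧ 0 < PrSig μ σ s0 := by
    intro c hc
    rw [hPrb] at hc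
    have hex : ∃ s0, (if f s0 = c then PrSig μ σ s0 else 0) ≠ 0 := by
      by_contra hno
      push_neg at hno
      rw [Finset.sum_eq_zero fun s _ => hno s] at hc
      exact lt_irrefl 0 hc
    obtain ⟨s0, hs0⟩ := hex
    have hfs0 : f s0 = c := by
      by_contra h'
      rw [if_neg h'] at hs0
      exact hs0 rfl
    rw [if_pos hfs0] at hs0
    exact ⟨s0, hfs0, lt_of_le_of_ne (hPrS0 s0) (Ne.symm hs0)⟩
  -- the two sign-transfer lemmas
  have hSLpos : ∀ c (v : Ω → ℝ), 0 < PrSig μ σb c →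
      (∀ s, f s = c → 0 < PrSig μ σ s → 0 ≤ ∑ ω : Ω, postPub μ σ s ω * v ω) →
      0 ≤ ∑ ω : Ω, postPub μ σb c ω * v ω := by
    intro c v hc h
    rw [hLb]
    refine mul_nonneg (inv_nonneg.mpr hc.le) ?_
    rw [hI1]
    refine Finset.sum_nonneg fun s _ => ?_
    by_cases hf : f s = c
    · rw [if_pos hf]
      rcases lt_or_eq_of_le (hPrS0 s) with hp | hp
      · rw [hX s v hp]
        exact mul_nonneg hp.le (h s hf hp)
      · rw [hX0 s v hp.symm]
    · rw [if_neg hf]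
  have hSLneg : ∀ c (v : Ω → ℝ), 0 < PrSig μ σb c →
      (∀ s, f s = c → 0 < PrSig μ σ s → (∑ ω : Ω, postPub μ σ s ω * v ω) < 0) →
      (∑ ω : Ω, postPub μ σb c ω * v ω) < 0 := by
    intro c v hc h
    obtain ⟨s0, hfs0, hp0⟩ := hfiber c hc
    rw [hLb]
    refine mul_neg_of_pos_of_neg (inv_pos.mpr hc) ?_
    rw [hI1]
    have hle : ∀ s : (N → A) × G,
        (if f s = c then (∑ ω : Ω, μ ω * σ ω s * v ω) else 0) ≤ 0 := by
      intro s
      by_cases hf : f s = c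
      · rw [if_pos hf]
        rcases lt_or_eq_of_le (hPrS0 s) with hp | hp
        · rw [hX s v hp]
          exact mul_nonpos_of_nonneg_of_nonpos hp.le (h s hf hp).le
        · rw [hX0 s v hp.symm]
      · rw [if_neg hf]
    have hlt : (if f s0 = c then (∑ ω : Ω, μ ω * σ ω s0 * v ω) else 0) < 0 := by
      rw [if_pos hfs0, hX s0 v hp0]
      exact mul_neg_of_pos_of_neg hp0 (h s0 hfs0 hp0)
    calc (∑ s : (N → A) × G, if f s = c then (∑ ω : Ω, μ ω * σ ω s * v ω) else 0)
        < ∑ _s : (N → A) × G, (0:ℝ) :=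
          Finset.sum_lt_sum (fun s _ => hle s) ⟨s0, Finset.mem_univ s0, hlt⟩
      _ = 0 := by simp
  -- fiber facts
  have hprof : ∀ (s : (N → A) × G) c, f s = c →
      profileOf type c.1 = profileOf type s.1 := by
    intro s c h
    rw [← h, hf1]
    exact (hrep s.1).2
  have habar : ∀ (s : (N → A) × G) c, f s = c → c.1 ∈ Abar := by
    intro s c h
    rw [← h, hf1]
    exact (hrep s.1).1
  have hbeta : ∀ (s : (N → A) × G) c, f s = c →
      c.2 = blockPub type u d s.1 (postPub μ σ s) := by
    intro s c h
    rw [← h, hf2]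
  -- the public signature of every supported meta-signal is itself
  have hBT : ∀ c, 0 < PrSig μ σb c →
      blockPub type u d c.1 (postPub μ σb c) = c.2 := by
    intro c hc
    obtain ⟨s0, hfs0, hp0⟩ := hfiber c hc
    have hprof0 := hprof s0 c hfs0
    ext x
    obtain ⟨δ, t, b, b'⟩ := x
    constructor
    · rintro ⟨hd1, hd2, hd3, hd4⟩
      simp only at hd1 hd2 hd3 hd4
      by_contra hnot
      have hneg : ∀ s, f s = c → 0 < PrSig μ σ s →
          (∑ ω : Ω, postPub μ σ s ω * (u t b (profileOf type c.1) ω -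
            u t b' (applyDev (profileOf type c.1) δ) ω)) < 0 := by
        intro s hfs hps
        have hpr := hprof s c hfs
        have hnm : (δ, t, b, b') ∉ blockPub type u d s.1 (postPub μ σ s) := by
          rw [← hbeta s c hfs]
          exact hnot
        have hineq : ¬ ((∑ ω : Ω, postPub μ σ s ω * u t b' (applyDev (profileOf type s.1) δ) ω)
            ≤ ∑ ω : Ω, postPub μ σ s ω * u t b (profileOf type s.1) ω) := by
          intro hle
          exact hnm ⟨hd1, by rw [← hpr]; exact hd2, hd3, hle⟩
        push_neg at hineq
        rw [hpr, hconv]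
        linarith
      have hlt := hSLneg c _ hc hneg
      rw [hconv] at hlt
      linarith
    · intro hx
      have hx0 : (δ, t, b, b') ∈ blockPub type u d s0.1 (postPub μ σ s0) := by
        rw [← hbeta s0 c hfs0]
        exact hx
      obtain ⟨hd1, hd2, hd3, _⟩ := hx0
      simp only at hd1 hd2 hd3
      have hpos : 0 ≤ ∑ ω : Ω, postPub μ σb c ω * (u t b (profileOf type c.1) ω -
          u t b' (applyDev (profileOf type c.1) δ) ω) := by
        refine hSLpos c _ hc ?_
        intro s hfs hps
        have hpr := hprof s c hfs
        have hxs : (δ, t, b, b') ∈ blockPub type u d s.1 (postPub μ σ s) := by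
          rw [← hbeta s c hfs]
          exact hx
        obtain ⟨_, _, _, hle⟩ := hxs
        simp only at hle
        rw [hpr, hconv]
        linarith
      rw [hconv] at hpos
      refine ⟨hd1, by rw [hprof0]; exact hd2, hd3, by simp only; linarith⟩
  -- stability of the merged policy
  have hstabb : StablePubPolicy type μ u d (fun s => s.1) σb := by
    intro c hc
    apply stable_of_covering
    intro δ hdev hfe
    obtain ⟨s0, hfs0, hp0⟩ := hfiber c hc
    have hprof0 := hprof s0 c hfs0
    obtain ⟨x, hxm, hxδ⟩ := stable_covering type u d s0.1 (postPub μ σ s0)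
      (hstab s0 hp0) δ hdev (by rw [← hprof0]; exact hfe)
    refine ⟨x, ?_, hxδ⟩
    rw [hBT c hc, hbeta s0 c hfs0]
    exact hxm
  -- support condition
  have hsupp2 : ∀ ω c, σb ω c ≠ 0 → c.1 ∈ Abar ∧ c.2 ∈ Bpub d (profileOf type c.1) := by
    intro ω c h
    obtain ⟨s, hfs, _⟩ := hwit ω c h
    have hprofs := hprof s c hfs
    refine ⟨habar s c hfs, ?_, ?_⟩
    · intro x hx
      rw [hbeta s c hfs] at hx
      obtain ⟨h1, h2, _, _⟩ := hx
      exact ⟨h1, by rw [hprofs]; exact h2⟩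
    · intro δ hdev hfe
      rw [hprofs] at hfe
      by_cases hp : 0 < PrSig μ σ s
      · obtain ⟨x, hx, hxδ⟩ := stable_covering type u d s.1 (postPub μ σ s)
          (hstab s hp) δ hdev hfe
        exact ⟨x, by rw [hbeta s c hfs]; exact hx, hxδ⟩
      · have hp0 : PrSig μ σ s = 0 := le_antisymm (not_lt.mp hp) (hPrS0 s)
        have hpz : ∀ F : Ω → ℝ, (∑ ω : Ω, postPub μ σ s ω * F ω) = 0 := by
          intro F
          refine Finset.sum_eq_zero fun ω _ => ?_
          unfold postPub
          rw [hp0, div_zero, zero_mul]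
        have hex : ∃ t b b', 0 < δ t b b' := by
          by_contra hno
          push_neg at hno
          have hz : devSum δ = 0 :=
            Finset.sum_eq_zero fun t _ => Finset.sum_eq_zero fun b _ =>
              Finset.sum_eq_zero fun b' _ => Nat.le_zero.mp (hno t b b')
          have := hdev.2.1
          omega
        obtain ⟨t, b, b', hpos⟩ := hex
        refine ⟨(δ, t, b, b'), ?_, rfl⟩
        rw [hbeta s c hfs]
        exact ⟨hdev, hfe, hpos, by rw [hpz, hpz]⟩
  -- the principal's utility is preserved
  have hutil : utilP type μ u0 (fun s => s.1) σb = utilP type μ u0 (fun s => s.1) σ := by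
    unfold utilP
    refine Finset.sum_congr rfl fun ω _ => ?_
    congr 1
    have hsupp3 : Function.support
        (fun c => σb ω c * u0 (profileOf type c.1) ω) ⊆
        ↑(Finset.image f Finset.univ) := by
      intro c hc
      have : σb ω c ≠ 0 := by
        intro h0
        apply hc
        simp [h0]
      exact hsuppb ω this
    rw [finsum_eq_sum_of_support_subset _ hsupp3, finsum_eq_sum_of_fintype]
    have h2 : ∀ c, σb ω c * u0 (profileOf type c.1) ω =
        ∑ s ∈ Finset.univ.filter (fun s => f s = c), σ ω s * u0 (profileOf type s.1) ω := by
      intro c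
      rw [Finset.sum_filter, hσb', Finset.sum_mul]
      refine Finset.sum_congr rfl fun s _ => ?_
      by_cases hf : f s = c
      · rw [if_pos hf, if_pos hf, hprof s c hf]
      · rw [if_neg hf, if_neg hf, zero_mul]
    rw [Finset.sum_congr rfl fun c _ => h2 c]
    exact Finset.sum_fiberwise_of_maps_to
      (fun s _ => Finset.mem_image_of_mem f (Finset.mem_univ s)) _
  refine ⟨σb, ⟨hσb0, fun ω => (Finset.image f Finset.univ).finite_toSet.subset (hsuppb ω),
      fun ω => ?_⟩, hsupp2, hstabb, hutil, ?_⟩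
  · rw [finsum_eq_sum_of_support_subset _ (hsuppb ω)]
    have h2 : ∀ c, σb ω c = ∑ s ∈ Finset.univ.filter (fun s => f s = c), σ ω s := by
      intro c
      rw [Finset.sum_filter, hσb']
    rw [Finset.sum_congr rfl fun c _ => h2 c]
    rw [Finset.sum_fiberwise_of_maps_to
      (fun s _ => Finset.mem_image_of_mem f (Finset.mem_univ s)) _]
    exact hσsum ω
  · intro c hc
    obtain ⟨s0, hfs0, _⟩ := hfiber c hc
    exact ⟨habar s0 c hfs0, hBT c hc⟩

end Persuasion
end

section
/- Fix a persuasion instance and a representative set Ā. For every finite set G and every stable semi-private policy σ: Ω → Δ(A^N × G^N), there exist a finite set G̃ and a stable semi-private policy σ̃: Ω → Δ(Ā × G̃^N), supported only on representative joint actions, that yields the principal the same expected utility as σ. -/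
open scoped Classical BigOperators

namespace Persuasion

/-- Profiles are invariant under type-preserving permutations of the agents. -/
lemma profileOf_perm {N A T : Type} [Fintype N] (type : N → T) (π : Equiv.Perm N)
    (htype : ∀ i, type (π i) = type i) (b : N → A) :
    profileOf type (fun i => b (π i)) = profileOf type b := by
  classical
  funext t c
  unfold profileOf
  apply Finset.card_bij (fun i _ => π i)
  · intro i hi
    simp only [Finset.mem_filter, Finset.mem_univ, true_and] at hi ⊢
    exact ⟨(htype i).trans hi.1, hi.2⟩
  · intro i _ j _ h
    exact π.injective h
  · intro j hj
    simp only [Finset.mem_filter, Finset.mem_univ, true_and] at hj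
    refine ⟨π.symm j, ?_, π.apply_symm_apply j⟩
    simp only [Finset.mem_filter, Finset.mem_univ, true_and]
    constructor
    · have := htype (π.symm j)
      rw [π.apply_symm_apply] at this
      rw [← this]; exact hj.1
    · rw [π.apply_symm_apply]; exact hj.2

/-- Stability transfers along a type-preserving permutation of the agents. -/
lemma stableAt_perm {Ω N A T : Type} [Fintype Ω] [Fintype N] (type : N → T)
    (u : T → A → (T → A → ℕ) → Ω → ℝ) (d : ℕ) (π : Equiv.Perm N)
    (htype : ∀ i, type (π i) = type i) (a : N → A) (q : N → Ω → ℝ)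
    (hst : StableAt type u d a q) :
    StableAt type u d (fun i => a (π i)) (fun i => q (π i)) := by
  classical
  unfold StableAt at hst ⊢
  rintro ⟨N', a', h1, h2, h3⟩
  apply hst
  refine ⟨N'.map π.toEmbedding, fun j => a' (π.symm j), ?_, ?_, ?_⟩
  · rwa [Finset.card_map]
  · rwa [Finset.card_map]
  · intro j hj
    rw [Finset.mem_map] at hj
    obtain ⟨i, hi, rfl⟩ := hj
    have hmem : ∀ k, π k ∈ N'.map π.toEmbedding ↔ k ∈ N' := by
      intro k
      simp only [Finset.mem_map, Equiv.coe_toEmbedding]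
      constructor
      · rintro ⟨l, hl, he⟩; rwa [← π.injective he]
      · intro hk; exact ⟨k, hk, rfl⟩
    have hupd : updAction (fun k => a (π k)) N' a'
        = fun k => updAction a (N'.map π.toEmbedding) (fun j => a' (π.symm j)) (π k) := by
      funext k
      unfold updAction
      by_cases hk : k ∈ N'
      · rw [if_pos hk, if_pos ((hmem k).mpr hk)]; simp
      · rw [if_neg hk, if_neg (fun h => hk ((hmem k).mp h))]
    have hprof : profileOf type (updAction a (N'.map π.toEmbedding) (fun j => a' (π.symm j)))
        = profileOf type (updAction (fun k => a (π k)) N' a') := by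
      rw [hupd]
      exact (profileOf_perm type π htype _).symm
    have hgain := h3 i hi
    have hupdi : updAction a (N'.map π.toEmbedding) (fun j => a' (π.symm j)) (π i)
        = updAction (fun k => a (π k)) N' a' i := by rw [hupd]
    simp only [Equiv.coe_toEmbedding]
    rw [hupdi, hprof, htype i, ← profileOf_perm type π htype a]
    exact hgain

/-- Two joint actions with the same profile differ by a type-preserving permutation. -/
lemma exists_perm_of_profile_eq {N A T : Type} [Fintype N] (type : N → T)
    (a aR : N → A) (h : profileOf type a = profileOf type aR) :
    ∃ π : Equiv.Perm N, (∀ i, type (π i) = type i) ∧ ∀ i, a (π i) = aR i := by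
  classical
  set f : N → T × A := fun i => (type i, a i) with hf
  set g : N → T × A := fun i => (type i, aR i) with hg
  have hcard : ∀ x : T × A, Fintype.card {i // g i = x} = Fintype.card {i // f i = x} := by
    rintro ⟨t, c⟩
    have hpt := congrFun (congrFun h t) c
    unfold profileOf at hpt
    rw [Fintype.card_subtype, Fintype.card_subtype]
    have e1 : (Finset.univ.filter fun i => g i = (t, c))
        = Finset.univ.filter fun i => type i = t ∧ aR i = c := by
      ext i; simp [hg, Prod.ext_iff]
    have e2 : (Finset.univ.filter fun i => f i = (t, c))
        = Finset.univ.filter fun i => type i = t ∧ a i = c := by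
      ext i; simp [hf, Prod.ext_iff]
    rw [e1, e2, hpt]
  let e : ∀ x : T × A, {i // g i = x} ≃ {i // f i = x} :=
    fun x => Fintype.equivOfCardEq (hcard x)
  refine ⟨(Equiv.sigmaFiberEquiv g).symm.trans
      ((Equiv.sigmaCongrRight e).trans (Equiv.sigmaFiberEquiv f)), ?_⟩
  have key : ∀ i, f (((Equiv.sigmaFiberEquiv g).symm.trans
      ((Equiv.sigmaCongrRight e).trans (Equiv.sigmaFiberEquiv f))) i) = g i := by
    intro i
    exact (e (g i) ⟨i, rfl⟩).2
  exact ⟨fun i => congrArg Prod.fst (key i), fun i => congrArg Prod.snd (key i)⟩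

/-- **Representative joint actions suffice for semi-private persuasion (Lemma B.2).**
For every stable semi-private policy `σ : Ω → Δ(A^N × G^N)` there are a finite set `G'` and
a stable semi-private policy `σ' : Ω → Δ(Abar × G'^N)`, supported only on representative
joint actions, yielding the principal the same expected utility as `σ`. -/
theorem stmt6 {Ω N A T G : Type} [Fintype Ω] [Fintype N] [Fintype A] [Fintype T]
    [Fintype G]
    (type : N → T) (μ : Ω → ℝ) (hμ0 : ∀ ω, 0 ≤ μ ω) (hμ1 : (∑ ω : Ω, μ ω) = 1)
    (u : T → A → (T → A → ℕ) → Ω → ℝ) (u0 : (T → A → ℕ) → Ω → ℝ) (d : ℕ)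
    (Abar : Finset (N → A))
    (hAbar : ∀ a : N → A, ∃! aR, aR ∈ Abar ∧ profileOf type aR = profileOf type a)
    (σ : Ω → ((N → A) × (N → G)) → ℝ)
    (hσ : IsPolicy σ)
    (hstab : StableSemiPolicy type μ u d σ) :
    ∃ (G' : Type) (_ : Finite G') (σ' : Ω → ((N → A) × (N → G')) → ℝ),
      IsPolicy σ' ∧
      (∀ ω s, σ' ω s ≠ 0 → s.1 ∈ Abar) ∧
      StableSemiPolicy type μ u d σ' ∧
      utilP type μ u0 (fun s => s.1) σ' = utilP type μ u0 (fun s => s.1) σ := by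
  classical
  -- choose representatives and type-preserving permutations
  have hchoice : ∀ a : N → A, ∃ aR : N → A, ∃ π : Equiv.Perm N,
      aR ∈ Abar ∧ (∀ i, type (π i) = type i) ∧ (∀ i, a (π i) = aR i) := by
    intro a
    obtain ⟨aR, ⟨hmem, hprof⟩, -⟩ := hAbar a
    obtain ⟨π, h1, h2⟩ := exists_perm_of_profile_eq type a aR hprof.symm
    exact ⟨aR, π, hmem, h1, h2⟩
  choose R P hR hPt hPa using hchoice
  set F : ((N → A) × (N → G)) → ((N → A) × (N → (N → A) × G)) :=
    fun s => (R s.1, fun i => (s.1, s.2 (P s.1 i))) with hF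
  have hFinj : Function.Injective F := by
    rintro ⟨a1, g1⟩ ⟨a2, g2⟩ hEq
    rw [hF, Prod.mk.injEq] at hEq
    obtain ⟨hEq1, hEq2⟩ := hEq
    by_cases hN : Nonempty N
    · obtain ⟨i0⟩ := hN
      have ha : a1 = a2 := congrArg Prod.fst (congrFun hEq2 i0)
      subst ha
      have hg : g1 = g2 := by
        funext j
        have := congrArg Prod.snd (congrFun hEq2 ((P a1).symm j))
        simpa using this
      rw [hg]
    · have ha : a1 = a2 := funext fun i => absurd ⟨i⟩ hN
      have hg : g1 = g2 := funext fun i => absurd ⟨i⟩ hN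
      rw [ha, hg]
  set σ' : Ω → ((N → A) × (N → (N → A) × G)) → ℝ :=
    fun ω s' => ∑ s : (N → A) × (N → G), if F s = s' then σ ω s else 0 with hσ'
  have hσ'F : ∀ ω s, σ' ω (F s) = σ ω s := by
    intro ω s
    rw [hσ']
    simp only [hFinj.eq_iff]
    simp
  have hpush : ∀ (ω : Ω) (φ : ((N → A) × (N → (N → A) × G)) → ℝ),
      (∑ s' : (N → A) × (N → (N → A) × G), σ' ω s' * φ s')
        = ∑ s : (N → A) × (N → G), σ ω s * φ (F s) := by
    intro ω φ
    rw [hσ']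
    simp only [Finset.sum_mul]
    rw [Finset.sum_comm]
    refine Finset.sum_congr rfl fun s _ => ?_
    simp only [ite_mul, zero_mul]
    simp
  have hprofR : ∀ a : N → A, profileOf type (R a) = profileOf type a := by
    intro a
    have : (fun i => a (P a i)) = R a := funext (hPa a)
    rw [← this]
    exact profileOf_perm type (P a) (hPt a) a
  -- marginal computations
  have hmargF : ∀ (i : N) (aR : N → A) (gi' : (N → A) × G) (ω : Ω),
      margSemi σ' i aR gi' ω
        = ∑ s : (N → A) × (N → G),
            if (F s).1 = aR ∧ (F s).2 i = gi' then σ ω s else 0 := by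
    intro i aR gi' ω
    unfold margSemi
    rw [finsum_eq_sum_of_fintype]
    have step1 : ∀ g' : N → (N → A) × G,
        (if g' i = gi' then σ' ω (aR, g') else 0)
          = ∑ s : (N → A) × (N → G),
              if g' i = gi' then (if F s = (aR, g') then σ ω s else 0) else 0 := by
      intro g'
      rw [hσ']
      split <;> simp
    have hstep : (∑ g' : N → (N → A) × G, if g' i = gi' then σ' ω (aR, g') else 0)
        = ∑ g' : N → (N → A) × G, ∑ s : (N → A) × (N → G),
            if g' i = gi' then (if F s = (aR, g') then σ ω s else 0) else 0 :=
      Finset.sum_congr rfl fun g' _ => step1 g'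
    have hfinal : (∑ g' : N → (N → A) × G, if g' i = gi' then σ' ω (aR, g') else 0)
        = ∑ s : (N → A) × (N → G), if (F s).1 = aR ∧ (F s).2 i = gi' then σ ω s else 0 := by
      refine hstep.trans ?_
      rw [Finset.sum_comm]
      refine Finset.sum_congr rfl fun s _ => ?_
      rw [Fintype.sum_eq_single ((F s).2)]
      · by_cases h1 : (F s).1 = aR
        · have : F s = (aR, (F s).2) := by rw [Prod.ext_iff]; exact ⟨h1, rfl⟩
          rw [if_pos this]
          by_cases h2 : (F s).2 i = gi'
          · rw [if_pos h2, if_pos ⟨h1, h2⟩]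
          · rw [if_neg h2, if_neg (fun hc => h2 hc.2)]
        · have : ¬ (F s = (aR, (F s).2)) := fun hc => h1 (congrArg Prod.fst hc)
          rw [if_neg (fun hc : (F s).1 = aR ∧ (F s).2 i = gi' => h1 hc.1)]
          split <;> simp [this]
      · intro g' hg'
        split
        · rw [if_neg (fun hc : F s = (aR, g') => hg' (congrArg Prod.snd hc).symm)]
        · rfl
    convert hfinal using 2
    congr!
  have hmarg2 : ∀ (i : N) (a : N → A) (h : G) (ω : Ω),
      margSemi σ' i (R a) (a, h) ω = margSemi σ (P a i) a h ω := by
    intro i a h ω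
    rw [hmargF]
    unfold margSemi
    rw [finsum_eq_sum_of_fintype, Fintype.sum_prod_type]
    rw [Fintype.sum_eq_single a]
    · refine Finset.sum_congr rfl fun g _ => ?_
      have hcond : ((F (a, g)).1 = R a ∧ (F (a, g)).2 i = (a, h)) ↔ g (P a i) = h := by
        rw [hF]
        simp [Prod.ext_iff]
      split
      · rw [if_pos (hcond.mp ‹_›)]
      · rw [if_neg (fun hc => ‹¬ _› (hcond.mpr hc))]
    · intro b hb
      apply Finset.sum_eq_zero
      intro g _
      have : ¬ ((F (b, g)).1 = R a ∧ (F (b, g)).2 i = (a, h)) := by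
        rw [hF]
        rintro ⟨-, hc⟩
        exact hb (congrArg Prod.fst hc)
      rw [if_neg this]
  have hPrObs : ∀ (i : N) (a : N → A) (h : G),
      PrObsSemi μ σ' i (R a) (a, h) = PrObsSemi μ σ (P a i) a h := by
    intro i a h
    unfold PrObsSemi
    exact Finset.sum_congr rfl fun ω _ => by rw [hmarg2]
  have hpost : ∀ (i : N) (a : N → A) (h : G),
      postSemi μ σ' i (R a) (a, h) = postSemi μ σ (P a i) a h := by
    intro i a h
    funext ω
    unfold postSemi
    rw [hmarg2, hPrObs]
  refine ⟨(N → A) × G, inferInstance, σ', ⟨?_, ?_, ?_⟩, ?_, ?_, ?_⟩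
  · -- nonneg
    intro ω s'
    rw [hσ']
    refine Finset.sum_nonneg fun s _ => ?_
    split
    · exact hσ.1 ω s
    · exact le_refl 0
  · -- finite support
    intro ω
    exact Set.toFinite _
  · -- sums to one
    intro ω
    rw [finsum_eq_sum_of_fintype, hσ']
    rw [Finset.sum_comm]
    have : ∀ s : (N → A) × (N → G),
        (∑ s' : (N → A) × (N → (N → A) × G), if F s = s' then σ ω s else 0) = σ ω s := by
      intro s; simp
    have hstep : (∑ s : (N → A) × (N → G),
        ∑ s' : (N → A) × (N → (N → A) × G), if F s = s' then σ ω s else 0)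
        = ∑ s : (N → A) × (N → G), σ ω s :=
      Finset.sum_congr rfl fun s _ => this s
    rw [hstep]
    have := hσ.2.2 ω
    rwa [finsum_eq_sum_of_fintype] at this
  · -- support in Abar
    intro ω s' hne
    rw [hσ'] at hne
    obtain ⟨s, -, hs⟩ := Finset.exists_ne_zero_of_sum_ne_zero hne
    by_cases hFs : F s = s'
    · rw [← hFs, hF]
      exact hR s.1
    · rw [if_neg hFs] at hs
      exact absurd rfl hs
  · -- stability
    intro s' hpos
    have hne : ∃ s, F s = s' := by
      obtain ⟨ω0, -, hω0⟩ := Finset.exists_ne_zero_of_sum_ne_zero (ne_of_gt hpos)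
      have hσ'ne : σ' ω0 s' ≠ 0 := fun hc => hω0 (by rw [hc, mul_zero])
      rw [hσ'] at hσ'ne
      obtain ⟨s, -, hs⟩ := Finset.exists_ne_zero_of_sum_ne_zero hσ'ne
      by_cases hFs : F s = s'
      · exact ⟨s, hFs⟩
      · rw [if_neg hFs] at hs
        exact absurd rfl hs
    obtain ⟨⟨a, g⟩, rfl⟩ := hne
    have hPrEq : PrSig μ σ' (F (a, g)) = PrSig μ σ (a, g) := by
      unfold PrSig
      exact Finset.sum_congr rfl fun ω _ => by rw [hσ'F]
    rw [hPrEq] at hpos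
    have hst := hstab (a, g) hpos
    have hgoal : StableAt type u d (fun i => a (P a i))
        (fun i => postSemi μ σ (P a i) a (g (P a i))) :=
      stableAt_perm type u d (P a) (hPt a) a
        (fun j => postSemi μ σ j a (g j)) hst
    have hRa : (fun i => a (P a i)) = R a := funext (hPa a)
    rw [hRa] at hgoal
    have hpeq : (fun i => postSemi μ σ' i (F (a, g)).1 ((F (a, g)).2 i))
        = fun i => postSemi μ σ (P a i) a (g (P a i)) := by
      funext i
      rw [hF]
      exact hpost i a (g (P a i))
    rw [show (F (a, g)).1 = R a from rfl]
    rw [show (fun i => postSemi μ σ' i (F (a,g)).1 ((F (a,g)).2 i))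
        = fun i => postSemi μ σ (P a i) a (g (P a i)) from hpeq]
    exact hgoal
  · -- principal utility
    unfold utilP
    refine Finset.sum_congr rfl fun ω _ => ?_
    congr 1
    rw [finsum_eq_sum_of_fintype, finsum_eq_sum_of_fintype]
    rw [hpush ω (fun s' => u0 (profileOf type s'.1) ω)]
    refine Finset.sum_congr rfl fun s _ => ?_
    rw [hF]
    rw [hprofR]

end Persuasion
end

section
/- Consider the persuasion instance with a single world ω, two agents {1, 2} of a single type, action set A = {a1, a2}, and deviation bound d = 1. Denote by ρ1, ρ2, ρ3 the three action profiles in which two, one, and zero agents play a1, respectively. The agents' utilities are u(a1, ρ1) = u(a2, ρ3) = 0 and u(a1, ρ2) = u(a2, ρ2) = 1; the principal's utility is u_0(ρ1) = 1 and u_0(ρ2) = u_0(ρ3) = 0. Then: (i) the private policy that recommends the joint actions (a1, a2) and (a2, a1) with probability 3/8 each and (a1, a1) with probability 1/4 is stable and yields the principal expected utility 1/4; (ii) for either choice of a representative set Ā (which contains exactly one of (a1, a2), (a2, a1)), every stable private policy whose support uses only joint actions in Ā yields the principal expected utility 0. Consequently, no optimal private policy supported only on representative action vectors exists for this instance. 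-/
open scoped Classical BigOperators

namespace Persuasion
namespace Stmt12

/-- The single world. -/
abbrev Wd := Unit
/-- The two agents. -/
abbrev Ag := Bool
/-- The two actions: `0 = a1`, `1 = a2`. -/
abbrev Ac := Fin 2

/-- All agents have the same (unique) type. -/
def ty : Ag → Unit := fun _ => ()

/-- The prior (trivial, single world). -/
noncomputable def μ12 : Wd → ℝ := fun _ => 1

/-- The profile in which both agents play `a1`. -/
def ρ1 : Unit → Ac → ℕ := fun _ b => if b = 0 then 2 else 0
/-- The profile in which one agent plays `a1` and the other plays `a2`. -/
def ρ2 : Unit → Ac → ℕ := fun _ _ => 1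
/-- The profile in which both agents play `a2`. -/
def ρ3 : Unit → Ac → ℕ := fun _ b => if b = 0 then 0 else 2

/-- The joint action `(a1, a1)`. -/
def v11 : Ag → Ac := fun _ => 0
/-- The joint action `(a1, a2)`. -/
def v12 : Ag → Ac := fun i => if i = false then 0 else 1
/-- The joint action `(a2, a1)`. -/
def v21 : Ag → Ac := fun i => if i = false then 1 else 0

/-- The private policy recommending `(a1, a2)` and `(a2, a1)` with probability `3/8` each
and `(a1, a1)` with probability `1/4` (no additional private messages). -/
noncomputable def σ12 : Wd → ((Ag → Ac) × (Ag → Unit)) → ℝ :=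
  fun _ s => if s.1 = v12 ∨ s.1 = v21 then 3 / 8 else if s.1 = v11 then 1 / 4 else 0

lemma fin2_cases (x : Ac) : x = 0 ∨ x = 1 := by
  fin_cases x
  · exact Or.inl rfl
  · exact Or.inr rfl

def v22 : Ag → Ac := fun _ => 1

lemma enum_act : ∀ a : Ag → Ac, a = v11 ∨ a = v12 ∨ a = v21 ∨ a = v22 := by decide

lemma prof_eq (a : Ag → Ac) (t : Unit) (b : Ac) :
    profileOf ty a t b = (if a true = b then 1 else 0) + (if a false = b then 1 else 0) := by
  simp only [profileOf]
  rw [Finset.card_filter, Fintype.sum_bool]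
  simp [ty, eq_iff_true_of_subsingleton]

lemma prof_v11 : profileOf ty v11 = ρ1 := by
  funext t b; rw [prof_eq]; fin_cases b <;> rfl
lemma prof_v12 : profileOf ty v12 = ρ2 := by
  funext t b; rw [prof_eq]; fin_cases b <;> rfl
lemma prof_v21 : profileOf ty v21 = ρ2 := by
  funext t b; rw [prof_eq]; fin_cases b <;> rfl
lemma prof_v22 : profileOf ty v22 = ρ3 := by
  funext t b; rw [prof_eq]; fin_cases b <;> rfl

lemma sv11 (ω : Wd) (g : Ag → Unit) : σ12 ω (v11, g) = 1/4 := by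
  simp only [σ12]; rw [if_neg (by decide)]; norm_num
lemma sv12 (ω : Wd) (g : Ag → Unit) : σ12 ω (v12, g) = 3/8 := by
  simp only [σ12]; norm_num
lemma sv21 (ω : Wd) (g : Ag → Unit) : σ12 ω (v21, g) = 3/8 := by
  simp only [σ12]; norm_num
lemma sv22 (ω : Wd) (g : Ag → Unit) : σ12 ω (v22, g) = 0 := by
  simp only [σ12]; rw [if_neg (by decide), if_neg (by decide)]

lemma univ_act : (Finset.univ : Finset (Ag → Ac)) = {v11, v12, v21, v22} := by decide

lemma sum_actions (f : (Ag → Ac) → ℝ) :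
    ∑ aT : Ag → Ac, f aT = f v11 + f v12 + f v21 + f v22 := by
  rw [univ_act, Finset.sum_insert (by decide), Finset.sum_insert (by decide),
    Finset.sum_insert (by decide), Finset.sum_singleton]
  ring
lemma marg12 (i : Ag) (o : Ac) (aT : Ag → Ac) (ω : Wd) :
    margPriv σ12 i (o, ()) aT ω = if aT i = o then σ12 () (aT, fun _ => ()) else 0 := by
  by_cases h : aT i = o <;>
    simp [margPriv, finsum_unique, h, eq_iff_true_of_subsingleton]

lemma PrObs12 (i : Ag) (o : Ac) :
    PrObsPriv μ12 σ12 i (o, ()) = if o = 0 then 5/8 else 3/8 := by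
  simp only [PrObsPriv, Fintype.sum_unique, μ12, one_mul, finsum_eq_sum_of_fintype]
  rw [sum_actions]
  simp only [marg12, sv11, sv12, sv21, sv22]
  cases i <;> rcases fin2_cases o with h|h <;> subst h <;>
    norm_num [v11, v12, v21, v22]

lemma post12 (i : Ag) (o : Ac) (aT : Ag → Ac) (ω : Wd) :
    postPriv μ12 σ12 i (o, ()) aT ω =
      (if aT i = o then σ12 () (aT, fun _ => ()) else 0) / (if o = 0 then 5/8 else 3/8) := by
  simp only [postPriv, μ12, one_mul, marg12, PrObs12]

lemma upd_eq (aT : Ag → Ac) (i : Ag) (a' : Ag → Ac) (c : Ac) (hc : a' i = c) :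
    updAction aT {i} a' = Function.update aT i c := by
  funext j
  simp only [updAction, Finset.mem_singleton, Function.update]
  rcases eq_or_ne j i with h|h <;> simp [h, hc]
lemma v11f : v11 false = 0 := rfl
lemma v11t : v11 true = 0 := rfl
lemma v12f : v12 false = 0 := rfl
lemma v12t : v12 true = 1 := rfl
lemma v21f : v21 false = 1 := rfl
lemma v21t : v21 true = 0 := rfl
lemma v22f : v22 false = 1 := rfl
lemma v22t : v22 true = 1 := rfl

lemma U1 : Function.update v11 false (0:Ac) = v11 := by decide
lemma U2 : Function.update v12 false (0:Ac) = v12 := by decide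
lemma U3 : Function.update v21 false (0:Ac) = v11 := by decide
lemma U4 : Function.update v22 false (0:Ac) = v12 := by decide
lemma U5 : Function.update v11 false (1:Ac) = v21 := by decide
lemma U6 : Function.update v12 false (1:Ac) = v22 := by decide
lemma U7 : Function.update v21 false (1:Ac) = v21 := by decide
lemma U8 : Function.update v22 false (1:Ac) = v22 := by decide
lemma U9 : Function.update v11 true (0:Ac) = v11 := by decide
lemma U10 : Function.update v12 true (0:Ac) = v11 := by decide
lemma U11 : Function.update v21 true (0:Ac) = v21 := by decide
lemma U12 : Function.update v22 true (0:Ac) = v21 := by decide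
lemma U13 : Function.update v11 true (1:Ac) = v12 := by decide
lemma U14 : Function.update v12 true (1:Ac) = v12 := by decide
lemma U15 : Function.update v21 true (1:Ac) = v22 := by decide
lemma U16 : Function.update v22 true (1:Ac) = v22 := by decide

lemma key12 (u : Unit → Ac → (Unit → Ac → ℕ) → Wd → ℝ)
    (hu1 : ∀ ω, u () 0 ρ1 ω = 0) (hu2 : ∀ ω, u () 1 ρ3 ω = 0)
    (hu3 : ∀ ω, u () 0 ρ2 ω = 1) (hu4 : ∀ ω, u () 1 ρ2 ω = 1)
    (i : Ag) (o : Ac) (a' : Ag → Ac) :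
    ¬ (0 < ∑ aT : Ag → Ac, ∑ ω : Wd, postPriv μ12 σ12 i (o, ()) aT ω *
        (u () (updAction aT {i} a' i) (profileOf ty (updAction aT {i} a')) ω -
          u () (aT i) (profileOf ty aT) ω)) := by
  rw [not_lt, sum_actions]
  rcases fin2_cases (a' i) with hc|hc <;>
    rw [upd_eq v11 i a' _ hc, upd_eq v12 i a' _ hc, upd_eq v21 i a' _ hc,
      upd_eq v22 i a' _ hc] <;>
    simp only [Fintype.sum_unique, post12, sv11, sv12, sv21, sv22,
      Function.update_self] <;>
    cases i <;> rcases fin2_cases o with ho|ho <;> subst ho <;>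
    simp only [U1, U2, U3, U4, U5, U6, U7, U8, U9, U10, U11, U12, U13, U14, U15, U16,
      v11f, v11t, v12f, v12t, v21f, v21t, v22f, v22t,
      prof_v11, prof_v12, prof_v21, prof_v22, hu1, hu2, hu3, hu4] <;>
    norm_num [(by decide : ¬ (1:Ac) = 0)]
lemma pol12 : IsPolicy σ12 := by
  refine ⟨fun ω s => ?_, fun ω => Set.toFinite _, fun ω => ?_⟩
  · simp only [σ12]; split_ifs <;> norm_num
  · rw [finsum_eq_sum_of_fintype, Fintype.sum_prod_type]
    simp only [Fintype.sum_unique]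
    rw [sum_actions, sv11, sv12, sv21, sv22]
    norm_num

lemma stab12 (u : Unit → Ac → (Unit → Ac → ℕ) → Wd → ℝ)
    (hu1 : ∀ ω, u () 0 ρ1 ω = 0) (hu2 : ∀ ω, u () 1 ρ3 ω = 0)
    (hu3 : ∀ ω, u () 0 ρ2 ω = 1) (hu4 : ∀ ω, u () 1 ρ2 ω = 1) :
    StablePrivPolicy ty μ12 u 1 σ12 := by
  intro s _
  rintro ⟨N', a', h1, h2, hg⟩
  obtain ⟨i, hi⟩ := Finset.card_eq_one.mp (le_antisymm h2 h1)
  subst hi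
  exact key12 u hu1 hu2 hu3 hu4 i (s.1 i) a' (hg i (Finset.mem_singleton_self i))

lemma util12 (u0 : (Unit → Ac → ℕ) → Wd → ℝ)
    (h01 : ∀ ω, u0 ρ1 ω = 1) (h02 : ∀ ω, u0 ρ2 ω = 0) (h03 : ∀ ω, u0 ρ3 ω = 0) :
    utilP ty μ12 u0 (fun s => s.1) σ12 = 1/4 := by
  simp only [utilP, Fintype.sum_unique, μ12, one_mul, finsum_eq_sum_of_fintype,
    Fintype.sum_prod_type]
  rw [sum_actions]
  simp only [sv11, sv12, sv21, sv22, prof_v11, prof_v12, prof_v21, prof_v22,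
    h01, h02, h03]
  norm_num
lemma no_v11 (u : Unit → Ac → (Unit → Ac → ℕ) → Wd → ℝ)
    (hu1 : ∀ ω, u () 0 ρ1 ω = 0) (hu4 : ∀ ω, u () 1 ρ2 ω = 1)
    {G' : Type} [Fintype G'] (σ' : Wd → ((Ag → Ac) × (Ag → G')) → ℝ)
    (hpol : IsPolicy σ') (Abar : Finset (Ag → Ac))
    (hsupp : ∀ ω s, σ' ω s ≠ 0 → s.1 ∈ Abar)
    (hstab : StablePrivPolicy ty μ12 u 1 σ')
    (i0 : Ag) (hexc : ∀ aT, aT ∈ Abar → aT i0 = 0 → aT = v11)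
    (g : Ag → G') : σ' () (v11, g) = 0 := by
  by_contra hg
  have hgpos : 0 < σ' () (v11, g) := lt_of_le_of_ne (hpol.1 () _) (Ne.symm hg)
  have hPr : 0 < PrSig μ12 σ' (v11, g) := by
    have h : PrSig μ12 σ' (v11, g) = σ' () (v11, g) := by
      simp [PrSig, μ12, Fintype.sum_unique]
    rw [h]; exact hgpos
  have hst := hstab (v11, g) hPr
  have hm0 : ∀ aT, aT ≠ v11 → ∀ ω, margPriv σ' i0 ((0 : Ac), g i0) aT ω = 0 := by
    intro aT haT ω
    simp only [margPriv, finsum_eq_sum_of_fintype]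
    apply Finset.sum_eq_zero
    intro g' _
    split_ifs with hcond
    · by_contra hne
      exact haT (hexc aT (hsupp ω (aT, g') hne) hcond.1)
    · rfl
  have hMpos : ∀ ω, 0 < margPriv σ' i0 ((0 : Ac), g i0) v11 ω := by
    intro ω
    simp only [margPriv, finsum_eq_sum_of_fintype]
    refine Finset.sum_pos' (fun g' _ => ?_) ⟨g, Finset.mem_univ g, ?_⟩
    · split_ifs
      · exact hpol.1 _ _
      · exact le_refl 0
    · rw [if_pos ⟨rfl, rfl⟩]
      exact hgpos
  have hPrObs : PrObsPriv μ12 σ' i0 ((0 : Ac), g i0) =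
      margPriv σ' i0 ((0 : Ac), g i0) v11 () := by
    simp only [PrObsPriv, Fintype.sum_unique, μ12, one_mul, finsum_eq_sum_of_fintype]
    rw [sum_actions, hm0 v12 (by decide), hm0 v21 (by decide), hm0 v22 (by decide),
      add_zero, add_zero, add_zero]
  have hp11 : ∀ ω, postPriv μ12 σ' i0 ((0 : Ac), g i0) v11 ω = 1 := by
    intro ω
    simp only [postPriv, hPrObs, μ12, one_mul]
    exact div_self (ne_of_gt (hMpos ()))
  have hupd : profileOf ty (Function.update v11 i0 (1 : Ac)) = ρ2 := by
    cases i0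
    · rw [U5, prof_v21]
    · rw [U13, prof_v12]
  have main : 0 < ∑ aT : Ag → Ac, ∑ ω : Wd,
      postPriv μ12 σ' i0 ((0 : Ac), g i0) aT ω *
        (u (ty i0) (updAction aT {i0} (fun _ => 1) i0)
            (profileOf ty (updAction aT {i0} (fun _ => 1))) ω -
          u (ty i0) (aT i0) (profileOf ty aT) ω) := by
    rw [sum_actions]
    simp only [Fintype.sum_unique, postPriv, μ12, one_mul,
      hm0 v12 (by decide), hm0 v21 (by decide), hm0 v22 (by decide),
      zero_div, zero_mul, add_zero]
    simp only [hPrObs, upd_eq v11 i0 (fun _ => 1) 1 rfl, Function.update_self,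
      hupd, prof_v11, show v11 i0 = 0 from rfl, show ty i0 = () from rfl,
      hu1, hu4]
    rw [div_self (ne_of_gt (hMpos ()))]
    norm_num
  exact hst ⟨{i0}, fun _ => 1, by simp, le_rfl, fun j hj => by
    have hji : j = i0 := Finset.mem_singleton.mp hj
    subst hji
    exact main⟩
lemma util_zero (u0 : (Unit → Ac → ℕ) → Wd → ℝ)
    (h02 : ∀ ω, u0 ρ2 ω = 0) (h03 : ∀ ω, u0 ρ3 ω = 0)
    {G' : Type} [Fintype G'] (σ' : Wd → ((Ag → Ac) × (Ag → G')) → ℝ)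
    (hz : ∀ g, σ' () (v11, g) = 0) :
    utilP ty μ12 u0 (fun s => s.1) σ' = 0 := by
  simp only [utilP, Fintype.sum_unique, μ12, one_mul, finsum_eq_sum_of_fintype,
    show (default : Wd) = () from rfl]
  apply Finset.sum_eq_zero
  rintro ⟨a, gg⟩ _
  rcases enum_act a with h|h|h|h <;> subst h
  · rw [hz gg, zero_mul]
  · show σ' () (v12, gg) * u0 (profileOf ty v12) () = 0
    rw [prof_v12, h02, mul_zero]
  · show σ' () (v21, gg) * u0 (profileOf ty v21) () = 0
    rw [prof_v21, h02, mul_zero]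
  · show σ' () (v22, gg) * u0 (profileOf ty v22) () = 0
    rw [prof_v22, h03, mul_zero]

lemma rep_cases (Abar : Finset (Ag → Ac))
    (hA : ∀ a : Ag → Ac, ∃! aR, aR ∈ Abar ∧ profileOf ty aR = profileOf ty a) :
    (v12 ∈ Abar ∧ v21 ∉ Abar) ∨ (v21 ∈ Abar ∧ v12 ∉ Abar) := by
  obtain ⟨r, ⟨hr, hpr⟩, huniq⟩ := hA v12
  rw [prof_v12] at hpr
  rcases enum_act r with h|h|h|h <;> subst h
  · rw [prof_v11] at hpr; exact absurd hpr (by decide)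
  · left
    refine ⟨hr, fun hmem => ?_⟩
    have h21 := huniq v21 ⟨hmem, by rw [prof_v21, prof_v12]⟩
    exact absurd h21 (by decide)
  · right
    refine ⟨hr, fun hmem => ?_⟩
    have h12 := huniq v12 ⟨hmem, rfl⟩
    exact absurd h12 (by decide)
  · rw [prof_v22] at hpr; exact absurd hpr (by decide)


/-- **An optimal private policy supported only on representative action vectors need not
exist (Proposition 5.1).** In the instance with a single world, two agents of a single
type, actions `{a1, a2}`, deviation bound `d = 1`, agent utilities
`u(a1, ρ1) = u(a2, ρ3) = 0`, `u(a1, ρ2) = u(a2, ρ2) = 1` and principal utilities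
`u0(ρ1) = 1`, `u0(ρ2) = u0(ρ3) = 0`: (i) the policy `σ12` is stable and yields the
principal expected utility `1/4`; (ii) for every representative set, every stable private
policy supported on it yields the principal expected utility `0`; hence (iii) no stable
private policy supported on a representative set is optimal. -/
theorem stmt12
    (u : Unit → Ac → (Unit → Ac → ℕ) → Wd → ℝ)
    (u0 : (Unit → Ac → ℕ) → Wd → ℝ)
    (hu1 : ∀ ω, u () 0 ρ1 ω = 0)
    (hu2 : ∀ ω, u () 1 ρ3 ω = 0)
    (hu3 : ∀ ω, u () 0 ρ2 ω = 1)
    (hu4 : ∀ ω, u () 1 ρ2 ω = 1)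
    (h01 : ∀ ω, u0 ρ1 ω = 1)
    (h02 : ∀ ω, u0 ρ2 ω = 0)
    (h03 : ∀ ω, u0 ρ3 ω = 0) :
    (IsPolicy σ12 ∧ StablePrivPolicy ty μ12 u 1 σ12 ∧
      utilP ty μ12 u0 (fun s => s.1) σ12 = 1 / 4) ∧
    (∀ Abar : Finset (Ag → Ac),
      (∀ a : Ag → Ac, ∃! aR, aR ∈ Abar ∧ profileOf ty aR = profileOf ty a) →
      (∀ (G' : Type), Finite G' → ∀ σ' : Wd → ((Ag → Ac) × (Ag → G')) → ℝ,
        IsPolicy σ' → (∀ ω s, σ' ω s ≠ 0 → s.1 ∈ Abar) →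
        StablePrivPolicy ty μ12 u 1 σ' →
        utilP ty μ12 u0 (fun s => s.1) σ' = 0) ∧
      ¬ ∃ (G' : Type) (_ : Finite G') (σ' : Wd → ((Ag → Ac) × (Ag → G')) → ℝ),
          IsPolicy σ' ∧ (∀ ω s, σ' ω s ≠ 0 → s.1 ∈ Abar) ∧
          StablePrivPolicy ty μ12 u 1 σ' ∧
          ∀ (G'' : Type), Finite G'' → ∀ σ'' : Wd → ((Ag → Ac) × (Ag → G'')) → ℝ,
            IsPolicy σ'' → StablePrivPolicy ty μ12 u 1 σ'' →
            utilP ty μ12 u0 (fun s => s.1) σ'' ≤ utilP ty μ12 u0 (fun s => s.1) σ') := by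
  refine ⟨⟨pol12, stab12 u hu1 hu2 hu3 hu4, util12 u0 h01 h02 h03⟩, ?_⟩
  intro Abar hAbar
  have main2 : ∀ (G' : Type), Finite G' → ∀ σ' : Wd → ((Ag → Ac) × (Ag → G')) → ℝ,
      IsPolicy σ' → (∀ ω s, σ' ω s ≠ 0 → s.1 ∈ Abar) →
      StablePrivPolicy ty μ12 u 1 σ' →
      utilP ty μ12 u0 (fun s => s.1) σ' = 0 := by
    intro G' hG' σ' hpol hsupp hstab
    letI := Fintype.ofFinite G'
    rcases rep_cases Abar hAbar with ⟨h12, h21⟩ | ⟨h21, h12⟩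
    · refine util_zero u0 h02 h03 σ' fun g =>
        no_v11 u hu1 hu4 σ' hpol Abar hsupp hstab true ?_ g
      intro aT hmem h0
      rcases enum_act aT with h|h|h|h <;> subst h
      · rfl
      · exact absurd h0 (by decide)
      · exact absurd hmem h21
      · exact absurd h0 (by decide)
    · refine util_zero u0 h02 h03 σ' fun g =>
        no_v11 u hu1 hu4 σ' hpol Abar hsupp hstab false ?_ g
      intro aT hmem h0
      rcases enum_act aT with h|h|h|h <;> subst h
      · rfl
      · exact absurd hmem h12
      · exact absurd h0 (by decide)
      · exact absurd h0 (by decide)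
  refine ⟨main2, ?_⟩
  rintro ⟨G', hG', σ', hpol, hsupp, hstab, hopt⟩
  have h0 := main2 G' hG' σ' hpol hsupp hstab
  have hle := hopt Unit inferInstance σ12 pol12 (stab12 u hu1 hu2 hu3 hu4)
  rw [util12 u0 h01 h02 h03, h0] at hle
  norm_num at hle

end Stmt12
end Persuasion
end
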